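/- arXiv:1904.02993 — 11 statements merged into one kernel-verified Lean document; each statement's English description precedes it below -/
import Mathlib

section
/- Let A ⊆ B ⊆ ℝⁿ, let u : A → ℝᵐ and v : B → ℝᵐ be 1-Lipschitz maps, let δ ≥ 0 satisfy ‖u(x) − v(x)‖ ≤ δ for all x ∈ A, and let D ≥ 0 satisfy ‖v(x) − v(y)‖ ≤ D for all x ∈ A and y ∈ B. Then there exists a 1-Lipschitz map ũ : B → ℝᵐ with ũ(x) = u(x) for all x ∈ A and ‖v(x) − ũ(x)‖ ≤ √(δ² + 2δD) for all x ∈ B. -/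
/-!
Lift to `E × ℝ` with the Euclidean product norm: put `A` at height `0` carrying `u` and `B` at
height `t = √(δ² + 2δD)` carrying `v`. By the triangle inequality through `v a`,
`‖u a - v b‖² ≤ (δ + ‖v a - v b‖)² ≤ ‖a - b‖² + t²`, so the combined map is 1-Lipschitz on the
two sheets. Extend it by Kirszbraun's theorem and restrict to height `0`; a point `b ∈ B` is at
distance `t` from its copy at height `t`, where the extension equals `v b`.

For Kirszbraun's theorem, to place a new point `z` given finitely many points `t`, take a
minimiser `y₀` of `max_t ‖y - f t‖ / ‖z - t‖`. It lies in the convex hull of the images of the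
points realising the maximum (otherwise moving towards that hull lowers the maximum), and the
variance inequality `∑ wᵢ ‖qᵢ - ∑ wⱼ qⱼ‖² ≤ ∑ wᵢ ‖pᵢ - z‖²` for a nonexpansive correspondence
`pᵢ ↦ qᵢ` then forces the maximum to be at most `1`. Adding points one at a time and a compactness argument in
the product of closed balls `∏ₓ B(f s₀, ‖x - s₀‖)` give the extension to all of `E`.
-/

open Finset Filter Topology

section SeminormedAddCommGroup

variable {E F : Type*} [SeminormedAddCommGroup E] [SeminormedAddCommGroup F]

theorem norm_update_sub_le [DecidableEq E] {s : Set E} {h : E → F} {a : E} (ha : a ∉ s) {y : F}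
    (hh : ∀ x ∈ s, ∀ x' ∈ s, ‖h x - h x'‖ ≤ ‖x - x'‖) (hy : ∀ x ∈ s, ‖y - h x‖ ≤ ‖a - x‖) :
    ∀ x ∈ insert a s, ∀ x' ∈ insert a s,
      ‖Function.update h a y x - Function.update h a y x'‖ ≤ ‖x - x'‖ := by
  have hne : ∀ x ∈ s, x ≠ a := fun x hx h => ha (h ▸ hx)
  rintro x (rfl | hx) x' (rfl | hx')
  · simp
  · rw [Function.update_self, Function.update_of_ne (hne x' hx')]
    exact hy x' hx'
  · rw [Function.update_self, Function.update_of_ne (hne x hx), norm_sub_rev, norm_sub_rev x]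
    exact hy x hx
  · rw [Function.update_of_ne (hne x hx), Function.update_of_ne (hne x' hx')]
    exact hh x hx x' hx'

theorem norm_sub_sq_le_add {p q r : F} {δ D ρ : ℝ} (hδ : 0 ≤ δ) (hpq : ‖p - q‖ ≤ δ)
    (hqr : ‖q - r‖ ≤ ρ) (hqrD : ‖q - r‖ ≤ D) : ‖p - r‖ ^ 2 ≤ ρ ^ 2 + (δ ^ 2 + 2 * δ * D) := by
  have htri : ‖p - r‖ ≤ δ + ‖q - r‖ :=
    (norm_sub_le_norm_sub_add_norm_sub p q r).trans (by linarith)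
  have := norm_nonneg (q - r)
  nlinarith [norm_nonneg (p - r)]

theorem norm_toLp_sub_toLp_sq (x y : E) (s t : ℝ) :
    ‖(WithLp.toLp 2 (x, s) : WithLp 2 (E × ℝ)) - WithLp.toLp 2 (y, t)‖ ^ 2 =
      ‖x - y‖ ^ 2 + (s - t) ^ 2 := by
  rw [← WithLp.toLp_sub, WithLp.prod_norm_sq_eq_of_L2]
  simp

end SeminormedAddCommGroup

section InnerProductSpace

variable {ι E F : Type*} [NormedAddCommGroup E] [InnerProductSpace ℝ E]
  [NormedAddCommGroup F] [InnerProductSpace ℝ F]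

theorem sum_sum_mul_norm_sub_sq (s : Finset ι) (w : ι → ℝ) (x : ι → E) :
    ∑ i ∈ s, ∑ j ∈ s, w i * w j * ‖x i - x j‖ ^ 2 =
      2 * ((∑ i ∈ s, w i) * ∑ i ∈ s, w i * ‖x i‖ ^ 2 - ‖∑ i ∈ s, w i • x i‖ ^ 2) := by
  have hexp : ∑ i ∈ s, ∑ j ∈ s, w i * w j * ‖x i - x j‖ ^ 2 =
      ∑ i ∈ s, ∑ j ∈ s, w i * w j * ‖x i‖ ^ 2
        - 2 * ∑ i ∈ s, ∑ j ∈ s, w i * w j * inner ℝ (x i) (x j)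
        + ∑ i ∈ s, ∑ j ∈ s, w i * w j * ‖x j‖ ^ 2 := by
    simp only [mul_sum, ← sum_sub_distrib, ← sum_add_distrib, norm_sub_sq_real]
    exact sum_congr rfl fun i _ => sum_congr rfl fun j _ => by ring
  have hswap : ∑ i ∈ s, ∑ j ∈ s, w i * w j * ‖x j‖ ^ 2 =
      ∑ i ∈ s, ∑ j ∈ s, w i * w j * ‖x i‖ ^ 2 := by
    rw [sum_comm]
    exact sum_congr rfl fun i _ => sum_congr rfl fun j _ => by ring
  have hprod : (∑ i ∈ s, w i) * ∑ i ∈ s, w i * ‖x i‖ ^ 2 =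
      ∑ i ∈ s, ∑ j ∈ s, w i * w j * ‖x i‖ ^ 2 := by
    rw [mul_sum]
    exact sum_congr rfl fun i _ => by rw [sum_mul]; exact sum_congr rfl fun j _ => by ring
  have hsq : ‖∑ i ∈ s, w i • x i‖ ^ 2 = ∑ i ∈ s, ∑ j ∈ s, w i * w j * inner ℝ (x i) (x j) := by
    simp only [← real_inner_self_eq_norm_sq, sum_inner, inner_sum, real_inner_smul_left,
      real_inner_smul_right, mul_assoc]
    rw [sum_comm]
    simp only [mul_left_comm]
  rw [hexp, hswap, hprod, hsq]
  ring

theorem sum_mul_norm_sub_sum_smul_sq_le {s : Finset ι} {w : ι → ℝ} {p : ι → E} {q : ι → F}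
    (hw₀ : ∀ i ∈ s, 0 ≤ w i) (hw₁ : ∑ i ∈ s, w i = 1)
    (hpq : ∀ i ∈ s, ∀ j ∈ s, ‖q i - q j‖ ≤ ‖p i - p j‖) (z : E) :
    ∑ i ∈ s, w i * ‖q i - ∑ j ∈ s, w j • q j‖ ^ 2 ≤ ∑ i ∈ s, w i * ‖p i - z‖ ^ 2 := by
  set y := ∑ j ∈ s, w j • q j
  have hcentered : ∑ i ∈ s, w i • (q i - y) = 0 := by
    simp only [smul_sub, sum_sub_distrib, ← sum_smul, hw₁, one_smul, y, sub_self]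
  have hq := sum_sum_mul_norm_sub_sq s w (fun i => q i - y)
  have hp := sum_sum_mul_norm_sub_sq s w (fun i => p i - z)
  simp only [sub_sub_sub_cancel_right, hcentered, hw₁, norm_zero] at hq hp
  have hmono : ∑ i ∈ s, ∑ j ∈ s, w i * w j * ‖q i - q j‖ ^ 2 ≤
      ∑ i ∈ s, ∑ j ∈ s, w i * w j * ‖p i - p j‖ ^ 2 :=
    sum_le_sum fun i hi => sum_le_sum fun j hj =>
      mul_le_mul_of_nonneg_left (pow_le_pow_left₀ (norm_nonneg _) (hpq i hi j hj) 2)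
        (mul_nonneg (hw₀ i hi) (hw₀ j hj))
  nlinarith [sq_nonneg ‖∑ i ∈ s, w i • (p i - z)‖]

theorem exists_norm_sub_le_of_mem_convexHull {s : Finset ι} {p : ι → E} {q : ι → F}
    (hpq : ∀ i ∈ s, ∀ j ∈ s, ‖q i - q j‖ ≤ ‖p i - p j‖) {y : F}
    (hy : y ∈ convexHull ℝ (q '' s)) (z : E) : ∃ i ∈ s, ‖q i - y‖ ≤ ‖p i - z‖ := by
  classical
  obtain ⟨-, i₀, -, -⟩ := convexHull_nonempty_iff.1 ⟨y, hy⟩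
  have : Nonempty ι := ⟨i₀⟩
  rw [← coe_image, Finset.mem_convexHull'] at hy
  obtain ⟨w, hw₀, hw₁, rfl⟩ := hy
  set σ := Function.invFunOn q s
  have hσ : ∀ c ∈ s.image q, σ c ∈ s ∧ q (σ c) = c := fun c hc =>
    have hc' : ∃ i ∈ s, q i = c := by simpa using hc
    ⟨Function.invFunOn_mem hc', Function.invFunOn_eq hc'⟩
  have key := sum_mul_norm_sub_sum_smul_sq_le (p := p ∘ σ) (q := id) hw₀ hw₁ (fun c hc d hd => by
    simpa only [id, Function.comp, (hσ c hc).2, (hσ d hd).2]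
      using hpq _ (hσ c hc).1 _ (hσ d hd).1) z
  simp only [id, Function.comp_apply] at key
  by_contra! hfar
  have hlt : ∀ c ∈ s.image q, ‖p (σ c) - z‖ ^ 2 < ‖c - ∑ d ∈ s.image q, w d • d‖ ^ 2 := by
    intro c hc
    have := hfar _ (hσ c hc).1
    rw [(hσ c hc).2] at this
    gcongr
  obtain ⟨c, hc, hwc⟩ := exists_ne_zero_of_sum_ne_zero (hw₁ ▸ one_ne_zero)
  exact key.not_gt (sum_lt_sum (fun d hd => mul_le_mul_of_nonneg_left (hlt d hd).le (hw₀ d hd))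
    ⟨c, hc, mul_lt_mul_of_pos_left (hlt c hc) ((hw₀ c hc).lt_of_ne' hwc)⟩)

theorem exists_forall_norm_add_smul_sub_lt {K : Set F} (hKc : IsComplete K) (hK : Convex ℝ K)
    {y : F} (hy : y ∉ K) :
    ∃ d : F, ∀ ε ∈ Set.Ioo (0 : ℝ) 1, ∀ c ∈ K, ‖y + ε • d - c‖ < ‖y - c‖ := by
  rcases K.eq_empty_or_nonempty with rfl | hne
  · exact ⟨0, by simp⟩
  obtain ⟨p, hpK, hp⟩ := exists_norm_eq_iInf_of_complete_convex hne hKc hK y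
  have hobtuse := (norm_eq_iInf_iff_real_inner_le_zero hK hpK).1 hp
  have hyp : 0 < ‖y - p‖ := norm_pos_iff.2 (sub_ne_zero.2 fun h => hy (h ▸ hpK))
  refine ⟨p - y, fun ε ⟨hε₀, hε₁⟩ c hc => lt_of_pow_lt_pow_left₀ 2 (norm_nonneg _) ?_⟩
  have hinner : 0 ≤ inner ℝ (y - p) (p - c) := by
    have := hobtuse c hc
    rw [← neg_sub c p, inner_neg_right]
    linarith
  rw [show y + ε • (p - y) - c = (1 - ε) • (y - p) + (p - c) by module,
    show y - c = (y - p) + (p - c) by abel, norm_add_sq_real, norm_add_sq_real, norm_smul,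
    real_inner_smul_left, Real.norm_of_nonneg (by linarith)]
  nlinarith [mul_pos (mul_pos hε₀ (by linarith : (0 : ℝ) < 2 - ε)) (pow_pos hyp 2),
    mul_nonneg hε₀.le hinner]

theorem mem_convexHull_of_forall_sup'_le {T : Finset ι} (hT : T.Nonempty) {c : ι → F}
    {r : ι → ℝ} (hr : ∀ i ∈ T, 0 < r i) {y₀ : F}
    (hmin : ∀ y, T.sup' hT (fun i => ‖y₀ - c i‖ / r i) ≤ T.sup' hT (fun i => ‖y - c i‖ / r i)) :
    y₀ ∈ convexHull ℝ
      (c '' ({i ∈ T | ‖y₀ - c i‖ / r i = T.sup' hT (fun i => ‖y₀ - c i‖ / r i)} : Finset ι))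
    := by
  set μ := T.sup' hT (fun i => ‖y₀ - c i‖ / r i)
  set I : Finset ι := {i ∈ T | ‖y₀ - c i‖ / r i = μ}
  by_contra hy₀
  obtain ⟨d, hd⟩ := exists_forall_norm_add_smul_sub_lt
    ((I.finite_toSet.image c).isCompact_convexHull (𝕜 := ℝ)).isComplete (convex_convexHull ℝ _) hy₀
  have hev : ∀ i ∈ T, ∀ᶠ ε in 𝓝[>] (0 : ℝ), ‖y₀ + ε • d - c i‖ / r i < μ := by
    intro i hi
    by_cases hiI : ‖y₀ - c i‖ / r i = μ
    · filter_upwards [Ioo_mem_nhdsGT one_pos] with ε hε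
      rw [← hiI]
      exact div_lt_div_of_pos_right
        (hd ε hε (c i) (subset_convexHull ℝ _ ⟨i, mem_filter.2 ⟨hi, hiI⟩, rfl⟩)) (hr i hi)
    · have hcont : Tendsto (fun ε : ℝ => ‖y₀ + ε • d - c i‖ / r i) (𝓝 0)
          (𝓝 (‖y₀ - c i‖ / r i)) := by
        have : Continuous fun ε : ℝ => ‖y₀ + ε • d - c i‖ / r i := by fun_prop
        simpa using this.tendsto 0
      exact nhdsWithin_le_nhds
        (hcont.eventually_lt_const (lt_of_le_of_ne (le_sup' (fun i => ‖y₀ - c i‖ / r i) hi) hiI))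
  obtain ⟨ε, hε⟩ := ((eventually_all_finset T).2 hev).exists
  exact (hmin (y₀ + ε • d)).not_gt ((sup'_lt_iff hT).2 hε)

theorem exists_norm_sub_le_of_finset [FiniteDimensional ℝ F] (T : Finset E) {f : E → F}
    (hf : ∀ s ∈ T, ∀ t ∈ T, ‖f s - f t‖ ≤ ‖s - t‖) (z : E) :
    ∃ y : F, ∀ t ∈ T, ‖y - f t‖ ≤ ‖z - t‖ := by
  by_cases hzT : z ∈ T
  · exact ⟨f z, hf z hzT⟩
  rcases T.eq_empty_or_nonempty with rfl | hT
  · exact ⟨0, by simp⟩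
  have hr : ∀ t ∈ T, 0 < ‖z - t‖ := fun t ht =>
    norm_pos_iff.2 (sub_ne_zero.2 fun h => hzT (h ▸ ht))
  set g : F → ℝ := fun y => T.sup' hT fun t => ‖y - f t‖ / ‖z - t‖
  have hg : Continuous g := Continuous.finset_sup'_apply hT fun t _ => by fun_prop
  have hg_coercive : Tendsto g (cocompact F) atTop := by
    obtain ⟨t₀, ht₀⟩ := hT
    refine tendsto_atTop_mono (fun y => le_sup' (fun t => ‖y - f t‖ / ‖z - t‖) ht₀) ?_
    refine Tendsto.atTop_div_const (hr t₀ ht₀) ?_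
    simpa [dist_eq_norm] using tendsto_dist_right_cocompact_atTop (f t₀)
  obtain ⟨y₀, hy₀⟩ := hg.exists_forall_le hg_coercive
  suffices hle : g y₀ ≤ 1 from ⟨y₀, fun t ht => by
    simpa [div_le_one (hr t ht)] using (le_sup' (fun t => ‖y₀ - f t‖ / ‖z - t‖) ht).trans hle⟩
  by_contra! hgt
  obtain ⟨t, ht, hnear⟩ := exists_norm_sub_le_of_mem_convexHull (p := id)
    (fun i hi j hj => hf i (mem_filter.1 hi).1 j (mem_filter.1 hj).1)
    (mem_convexHull_of_forall_sup'_le hT hr hy₀) z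
  obtain ⟨htT, hactive⟩ := mem_filter.1 ht
  have hfar : 1 < ‖y₀ - f t‖ / ‖z - t‖ := hactive ▸ hgt
  rw [one_lt_div (hr t htT), norm_sub_rev, norm_sub_rev y₀] at hfar
  exact hnear.not_gt hfar

theorem exists_extension_union_finset [DecidableEq E] [FiniteDimensional ℝ F] (T P : Finset E)
    {f : E → F} (hf : ∀ s ∈ T, ∀ t ∈ T, ‖f s - f t‖ ≤ ‖s - t‖) :
    ∃ h : E → F, Set.EqOn h f T ∧ ∀ x ∈ T ∪ P, ∀ y ∈ T ∪ P, ‖h x - h y‖ ≤ ‖x - y‖ := by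
  induction P using Finset.induction_on with
  | empty => exact ⟨f, Set.eqOn_refl _ _, by simpa using hf⟩
  | insert a P _ ih =>
    obtain ⟨h, hhf, hh⟩ := ih
    rw [Finset.union_insert]
    by_cases ha : a ∈ T ∪ P
    · exact ⟨h, hhf, by rwa [insert_eq_of_mem ha]⟩
    obtain ⟨y, hy⟩ := exists_norm_sub_le_of_finset (T ∪ P) hh a
    refine ⟨Function.update h a y, fun x hx => ?_, fun x hx x' hx' => ?_⟩
    · rw [Function.update_of_ne (ne_of_mem_of_not_mem (mem_union_left _ hx) ha)]
      exact hhf hx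
    · exact norm_update_sub_le (s := ↑(T ∪ P)) ha hh hy x (by simpa using hx) x'
        (by simpa using hx')

theorem exists_mem_closedBall_of_finset [FiniteDimensional ℝ F] {S : Set E} {f : E → F}
    (hf : ∀ s ∈ S, ∀ t ∈ S, ‖f s - f t‖ ≤ ‖s - t‖) {s₀ : E} (hs₀ : s₀ ∈ S) (P : Finset E) :
    ∃ g : E → F, (∀ x, ‖g x - f s₀‖ ≤ ‖x - s₀‖) ∧
      (∀ x ∈ P, ∀ y ∈ P, ‖g x - g y‖ ≤ ‖x - y‖) ∧ ∀ x ∈ P, x ∈ S → g x = f x := by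
  classical
  set T := insert s₀ {x ∈ P | x ∈ S}
  have hTS : ∀ x ∈ T, x ∈ S := by simp +contextual [T, or_imp, hs₀]
  obtain ⟨h, hhf, hh⟩ := exists_extension_union_finset T P
    (fun s hs t ht => hf s (hTS s hs) t (hTS t ht))
  have hP : ∀ x ∈ P, (T ∪ P).piecewise h (fun _ => f s₀) x = h x := fun x hx =>
    piecewise_eq_of_mem _ _ _ (mem_union_right _ hx)
  refine ⟨(T ∪ P).piecewise h fun _ => f s₀, fun x => ?_, fun x hx y hy => ?_, fun x hx hxS => ?_⟩
  · by_cases hx : x ∈ T ∪ P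
    · rw [piecewise_eq_of_mem _ _ _ hx, ← hhf (mem_insert_self _ _)]
      exact hh x hx s₀ (mem_union_left _ (mem_insert_self _ _))
    · simp [piecewise_eq_of_notMem _ _ _ hx]
  · rw [hP x hx, hP y hy]
    exact hh x (mem_union_right _ hx) y (mem_union_right _ hy)
  · rw [hP x hx]
    exact hhf (mem_insert_of_mem (mem_filter.2 ⟨hx, hxS⟩))

theorem kirszbraun_extension [FiniteDimensional ℝ F] (S : Set E) {f : E → F}
    (hf : ∀ s ∈ S, ∀ t ∈ S, ‖f s - f t‖ ≤ ‖s - t‖) :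
    ∃ g : E → F, (∀ x y, ‖g x - g y‖ ≤ ‖x - y‖) ∧ Set.EqOn g f S := by
  classical
  rcases S.eq_empty_or_nonempty with rfl | ⟨s₀, hs₀⟩
  · exact ⟨fun _ => 0, by simp, Set.eqOn_empty _ _⟩
  set Z : E × E → Set (E → F) := fun p =>
    {g | ‖g p.1 - g p.2‖ ≤ ‖p.1 - p.2‖} ∩ {g | p.1 ∈ S → g p.1 = f p.1}
  have hZ : ∀ p, IsClosed (Z p) := fun p =>
    (isClosed_le (by fun_prop) continuous_const).inter
      (isClosed_imp isOpen_const (isClosed_eq (continuous_apply _) continuous_const))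
  have hfinite : ∀ u : Finset (E × E),
      ((Set.univ.pi fun x => Metric.closedBall (f s₀) ‖x - s₀‖) ∩ ⋂ p ∈ u, Z p).Nonempty := by
    intro u
    obtain ⟨g, hball, hg, hgf⟩ :=
      exists_mem_closedBall_of_finset hf hs₀ (u.image Prod.fst ∪ u.image Prod.snd)
    refine ⟨g, fun x _ => by simpa [dist_eq_norm] using hball x, Set.mem_iInter₂.2 fun p hp => ?_⟩
    have h₁ := mem_union_left (u.image Prod.snd) (mem_image_of_mem Prod.fst hp)
    have h₂ := mem_union_right (u.image Prod.fst) (mem_image_of_mem Prod.snd hp)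
    exact ⟨hg _ h₁ _ h₂, hgf _ h₁⟩
  obtain ⟨g, -, hg⟩ := (isCompact_univ_pi fun x => isCompact_closedBall _ _).inter_iInter_nonempty
    Z hZ hfinite
  rw [Set.mem_iInter] at hg
  exact ⟨g, fun x y => (hg (x, y)).1, fun s hs => (hg (s, s)).2 hs⟩

theorem exists_extension_norm_sub_le [FiniteDimensional ℝ F] {A B : Set E} {u v : E → F}
    (hu : ∀ x ∈ A, ∀ y ∈ A, ‖u x - u y‖ ≤ ‖x - y‖)
    (hv : ∀ x ∈ B, ∀ y ∈ B, ‖v x - v y‖ ≤ ‖x - y‖) {t : ℝ} (ht : 0 < t)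
    (hcross : ∀ a ∈ A, ∀ b ∈ B, ‖u a - v b‖ ^ 2 ≤ ‖a - b‖ ^ 2 + t ^ 2) :
    ∃ ũ : E → F, (∀ x ∈ B, ∀ y ∈ B, ‖ũ x - ũ y‖ ≤ ‖x - y‖) ∧ Set.EqOn ũ u A ∧
      ∀ x ∈ B, ‖v x - ũ x‖ ≤ t := by
  set ι : E → ℝ → WithLp 2 (E × ℝ) := fun x s => WithLp.toLp 2 (x, s)
  have hι : ∀ x y s s', ‖ι x s - ι y s'‖ = √(‖x - y‖ ^ 2 + (s - s') ^ 2) := fun x y s s' => by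
    rw [← norm_toLp_sub_toLp_sq, Real.sqrt_sq (norm_nonneg _)]
  set w : WithLp 2 (E × ℝ) → F := fun p => if p.snd = 0 then u p.fst else v p.fst
  have hwA : ∀ a, w (ι a 0) = u a := fun a => if_pos rfl
  have hwB : ∀ b, w (ι b t) = v b := fun b => if_neg ht.ne'
  have hw : ∀ p ∈ (fun a => ι a 0) '' A ∪ (fun b => ι b t) '' B,
      ∀ q ∈ (fun a => ι a 0) '' A ∪ (fun b => ι b t) '' B, ‖w p - w q‖ ≤ ‖p - q‖ := by
    rintro _ (⟨a, ha, rfl⟩ | ⟨b, hb, rfl⟩) _ (⟨a', ha', rfl⟩ | ⟨b', hb', rfl⟩) <;>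
      simp only [hwA, hwB, hι] <;> apply Real.le_sqrt_of_sq_le
    · simpa using pow_le_pow_left₀ (norm_nonneg _) (hu a ha a' ha') 2
    · simpa using hcross a ha b' hb'
    · simpa [norm_sub_rev] using hcross a' ha' b hb
    · simpa using pow_le_pow_left₀ (norm_nonneg _) (hv b hb b' hb') 2
  obtain ⟨g, hg, hgw⟩ := kirszbraun_extension _ hw
  refine ⟨fun x => g (ι x 0), fun x _ y _ => ?_, fun a ha => ?_, fun b hb => ?_⟩
  · simpa [hι] using hg (ι x 0) (ι y 0)
  · simpa [hwA] using hgw (Or.inl ⟨a, ha, rfl⟩)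
  · have := hg (ι b t) (ι b 0)
    rwa [hgw (Or.inr ⟨b, hb, rfl⟩), hwB, hι, sub_self, norm_zero, sub_zero, zero_pow two_ne_zero,
      zero_add, Real.sqrt_sq ht.le] at this

end InnerProductSpace

theorem stmt_0 (n m : ℕ) (A B : Set (EuclideanSpace ℝ (Fin n))) (hAB : A ⊆ B)
    (u v : EuclideanSpace ℝ (Fin n) → EuclideanSpace ℝ (Fin m))
    (hu : ∀ x ∈ A, ∀ y ∈ A, ‖u x - u y‖ ≤ ‖x - y‖)
    (hv : ∀ x ∈ B, ∀ y ∈ B, ‖v x - v y‖ ≤ ‖x - y‖)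
    (δ : ℝ) (hδ : 0 ≤ δ) (hclose : ∀ x ∈ A, ‖u x - v x‖ ≤ δ)
    (D : ℝ) (hD : 0 ≤ D) (hDbound : ∀ x ∈ A, ∀ y ∈ B, ‖v x - v y‖ ≤ D) :
    ∃ uext : EuclideanSpace ℝ (Fin n) → EuclideanSpace ℝ (Fin m),
      (∀ x ∈ B, ∀ y ∈ B, ‖uext x - uext y‖ ≤ ‖x - y‖) ∧
      (∀ x ∈ A, uext x = u x) ∧
      (∀ x ∈ B, ‖v x - uext x‖ ≤ Real.sqrt (δ ^ 2 + 2 * δ * D)) := by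
  rcases hδ.eq_or_lt with rfl | hδpos
  · refine ⟨v, hv, fun x hx => ?_, fun x _ => by simp⟩
    exact (sub_eq_zero.1 (norm_le_zero_iff.1 (hclose x hx))).symm
  obtain ⟨ũ, hũB, hũA, hũv⟩ := exists_extension_norm_sub_le hu hv
    (t := √(δ ^ 2 + 2 * δ * D)) (Real.sqrt_pos.2 (by positivity)) fun a ha b hb => by
      rw [Real.sq_sqrt (by positivity)]
      exact norm_sub_sq_le_add hδ (hclose a ha) (hv a (hAB ha) b hb) (hDbound a ha b hb)
  exact ⟨ũ, hũB, fun x hx => hũA hx, hũv⟩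
end

section
/- Let n ≥ 1, m ≥ 2, let x, y ∈ ℝⁿ with x ≠ y, let z = (x + y)/2 and a = ‖x − z‖, and let δ > 0. Then there exist a 1-Lipschitz map u : {x, y} → ℝᵐ and a 1-Lipschitz map v : ℝⁿ → ℝᵐ with ‖u(p) − v(p)‖ = δ for p ∈ {x, y}, such that every 1-Lipschitz map ũ : {x, y, z} → ℝᵐ with ũ(x) = u(x) and ũ(y) = u(y) satisfies ‖v(z) − ũ(z)‖ = √(δ² + 2δa). -/
/-!
Let `t` be the signed coordinate along the line `xy`, centred at `z`, so `t x = a`, `t y = -a`.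
Take `u = t • e` and let `v` fold this line, in the plane of an orthonormal pair `e, f`, onto the
two segments joining the apex `c • f` to `± a • e`, where `c = √(δ² + 2δa)` makes both segments
of length `a + δ`. Then `v` is 1-Lipschitz, and `v x`, `v y` lie on those segments at distance
`a` from the apex, hence at distance `δ` from `u x`, `u y`. Since `‖u x - u y‖ = ‖x - y‖`, the
parallelogram law forces every 1-Lipschitz extension to send `z` to the midpoint `0`, at
distance `c` from `v z = c • f`.
-/

open RealInnerProductSpace

theorem EuclideanSpace.exists_orthonormal_pair {m : ℕ} (hm : 2 ≤ m) :
    ∃ e f : EuclideanSpace ℝ (Fin m), ‖e‖ = 1 ∧ ‖f‖ = 1 ∧ ⟪e, f⟫ = 0 := by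
  have hON := EuclideanSpace.orthonormal_single (ι := Fin m) (𝕜 := ℝ)
  exact ⟨_, _, hON.1 ⟨0, by omega⟩, hON.1 ⟨1, by omega⟩, hON.2 (by simp)⟩

section InnerProductSpace

variable {F : Type*} [NormedAddCommGroup F] [InnerProductSpace ℝ F]

theorem eq_zero_of_norm_sub_le_of_norm_add_le {v w : F} (h₁ : ‖w - v‖ ≤ ‖v‖)
    (h₂ : ‖w + v‖ ≤ ‖v‖) : w = 0 := by
  have parallelogram : ‖w - v‖ ^ 2 + ‖w + v‖ ^ 2 = 2 * ‖w‖ ^ 2 + 2 * ‖v‖ ^ 2 := by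
    rw [norm_sub_sq_real, norm_add_sq_real]; ring
  have : ‖w‖ ^ 2 ≤ 0 := by nlinarith [norm_nonneg (w - v), norm_nonneg (w + v)]
  exact norm_eq_zero.mp (by nlinarith [norm_nonneg w])

theorem exists_lipschitzWith_one_apply_add_smul (z w : F) :
    ∃ t : F → ℝ, LipschitzWith 1 t ∧ ∀ s : ℝ, t (z + s • w) = s * ‖w‖ := by
  refine ⟨fun p => ⟪‖w‖⁻¹ • w, p - z⟫, LipschitzWith.of_dist_le_mul fun p q => ?_, fun s => ?_⟩
  · have hν : ‖‖w‖⁻¹ • w‖ ≤ 1 := by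
      rw [norm_smul, norm_inv, norm_norm]
      exact inv_mul_le_one_of_le₀ le_rfl (norm_nonneg w)
    rw [Real.dist_eq, ← inner_sub_right, sub_sub_sub_cancel_right, NNReal.coe_one, one_mul,
      dist_eq_norm]
    exact (abs_real_inner_le_norm _ _).trans (mul_le_of_le_one_left (norm_nonneg _) hν)
  · rcases eq_or_ne w 0 with rfl | hw
    · simp
    simp only [add_sub_cancel_left, real_inner_smul_left, real_inner_smul_right,
      real_inner_self_eq_norm_sq]
    field_simp

def roof (e f : F) (α β c : ℝ) (s : ℝ) : F := (α * s) • e + (c - β * |s|) • f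

theorem roof_zero (e f : F) (α β c : ℝ) : roof e f α β c 0 = c • f := by
  simp [roof]

variable {e f : F}

theorem norm_smul_add_smul_sq (he : ‖e‖ = 1) (hf : ‖f‖ = 1) (hef : ⟪e, f⟫ = 0) (s t : ℝ) :
    ‖s • e + t • f‖ ^ 2 = s ^ 2 + t ^ 2 := by
  rw [norm_add_sq_real, norm_smul, norm_smul, real_inner_smul_left, real_inner_smul_right,
    hef, he, hf]
  simp [sq_abs]

theorem lipschitzWith_roof (he : ‖e‖ = 1) (hf : ‖f‖ = 1) (hef : ⟪e, f⟫ = 0) {α β : ℝ}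
    (hαβ : α ^ 2 + β ^ 2 ≤ 1) (c : ℝ) : LipschitzWith 1 (roof e f α β c) := by
  refine LipschitzWith.of_dist_le_mul fun s s' => ?_
  rw [dist_eq_norm, Real.dist_eq, NNReal.coe_one, one_mul]
  have hsub : roof e f α β c s - roof e f α β c s' =
      (α * (s - s')) • e + (β * (|s'| - |s|)) • f := by
    simp only [roof]; module
  have habs : (|s'| - |s|) ^ 2 ≤ (s - s') ^ 2 := by
    rw [← sq_abs (s - s'), ← sq_abs (|s'| - |s|), abs_sub_comm s]
    exact pow_le_pow_left₀ (abs_nonneg _) (abs_abs_sub_abs_le_abs_sub _ _) 2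
  refine (sq_le_sq₀ (norm_nonneg _) (abs_nonneg _)).mp ?_
  rw [hsub, norm_smul_add_smul_sq he hf hef, sq_abs]
  nlinarith [sq_nonneg α, sq_nonneg β, sq_nonneg (s - s')]

theorem norm_smul_sub_roof (he : ‖e‖ = 1) (hf : ‖f‖ = 1) (hef : ⟪e, f⟫ = 0) {a δ c s : ℝ}
    (ha : 0 ≤ a) (hδ : 0 < δ) (hc : a ^ 2 + c ^ 2 = (a + δ) ^ 2) (hs : |s| = a) :
    ‖s • e - roof e f (a / (a + δ)) (c / (a + δ)) c s‖ = δ := by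
  have hsub : s • e - roof e f (a / (a + δ)) (c / (a + δ)) c s =
      ((1 - a / (a + δ)) * s) • e + (c / (a + δ) * a - c) • f := by
    simp only [roof, hs]; module
  refine (sq_eq_sq₀ (norm_nonneg _) hδ.le).mp ?_
  rw [hsub, norm_smul_add_smul_sq he hf hef, mul_pow, ← sq_abs s, hs]
  field_simp
  linear_combination (δ ^ 2) * hc

end InnerProductSpace

theorem stmt_3_general (n m : ℕ) (hm : 2 ≤ m)
    (x y : EuclideanSpace ℝ (Fin n))
    (z : EuclideanSpace ℝ (Fin n)) (hz : z = (1 / 2 : ℝ) • (x + y))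
    (a : ℝ) (ha : a = ‖x - z‖)
    (δ : ℝ) (hδ : 0 < δ) :
    ∃ u v : EuclideanSpace ℝ (Fin n) → EuclideanSpace ℝ (Fin m),
      ‖u x - u y‖ ≤ ‖x - y‖ ∧
      (∀ p q : EuclideanSpace ℝ (Fin n), ‖v p - v q‖ ≤ ‖p - q‖) ∧
      (∀ p ∈ ({x, y} : Set (EuclideanSpace ℝ (Fin n))), ‖u p - v p‖ = δ) ∧
      (∀ uext : EuclideanSpace ℝ (Fin n) → EuclideanSpace ℝ (Fin m),
        (∀ p ∈ ({x, y, z} : Set (EuclideanSpace ℝ (Fin n))),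
          ∀ q ∈ ({x, y, z} : Set (EuclideanSpace ℝ (Fin n))),
            ‖uext p - uext q‖ ≤ ‖p - q‖) →
        uext x = u x → uext y = u y →
        ‖v z - uext z‖ = Real.sqrt (δ ^ 2 + 2 * δ * a)) := by
  obtain ⟨e, f, he, hf, hef⟩ := EuclideanSpace.exists_orthonormal_pair hm
  obtain ⟨t, ht, ht_line⟩ := exists_lipschitzWith_one_apply_add_smul z (x - z)
  have htx : t x = a := by simpa [ha] using ht_line 1
  have hty : t y = -a := by
    have hy : y = z + (-1 : ℝ) • (x - z) := by rw [hz]; module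
    rw [hy]; simpa [ha] using ht_line (-1)
  have htz : t z = 0 := by simpa using ht_line 0
  have ha0 : 0 ≤ a := ha ▸ norm_nonneg _
  set c := Real.sqrt (δ ^ 2 + 2 * δ * a)
  have hc : a ^ 2 + c ^ 2 = (a + δ) ^ 2 := by
    rw [Real.sq_sqrt (by positivity)]; ring
  set v := roof e f (a / (a + δ)) (c / (a + δ)) c ∘ t
  have hαβ : (a / (a + δ)) ^ 2 + (c / (a + δ)) ^ 2 ≤ 1 := by
    rw [div_pow, div_pow, ← add_div, hc, div_self (by positivity)]
  have hv : LipschitzWith 1 v := by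
    simpa using (lipschitzWith_roof he hf hef hαβ c).comp ht
  have hyz : y - z = -(x - z) := by rw [hz]; module
  have hax : ‖a • e‖ = a := by rw [norm_smul, he, mul_one, Real.norm_of_nonneg ha0]
  refine ⟨fun p => t p • e, v, ?_, fun p q => by simpa using hv.norm_sub_le p q, ?_, ?_⟩
  · simpa [← sub_smul, norm_smul, he] using ht.norm_sub_le x y
  · rintro p (rfl | rfl)
    · exact norm_smul_sub_roof he hf hef ha0 hδ hc (by rw [htx, abs_of_nonneg ha0])
    · exact norm_smul_sub_roof he hf hef ha0 hδ hc (by rw [hty, abs_neg, abs_of_nonneg ha0])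
  · intro uext hL (hx : uext x = t x • e) (hy : uext y = t y • e)
    have hzx : ‖uext z - a • e‖ ≤ ‖a • e‖ := by
      simpa [hx, htx, hax, norm_sub_rev z x, ← ha] using hL z (by simp) x (by simp)
    have hzy : ‖uext z + a • e‖ ≤ ‖a • e‖ := by
      simpa [hy, hty, hax, ← norm_neg (z - y), hyz, norm_sub_rev z x, ← ha]
        using hL z (by simp) y (by simp)
    rw [eq_zero_of_norm_sub_le_of_norm_add_le hzx hzy, sub_zero]
    show ‖roof e f _ _ c (t z)‖ = c
    rw [htz, roof_zero, norm_smul, hf, mul_one, Real.norm_of_nonneg (Real.sqrt_nonneg _)]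

theorem stmt_3 (n m : ℕ) (hn : 1 ≤ n) (hm : 2 ≤ m)
    (x y : EuclideanSpace ℝ (Fin n)) (hxy : x ≠ y)
    (z : EuclideanSpace ℝ (Fin n)) (hz : z = (1 / 2 : ℝ) • (x + y))
    (a : ℝ) (ha : a = ‖x - z‖)
    (δ : ℝ) (hδ : 0 < δ) :
    ∃ u v : EuclideanSpace ℝ (Fin n) → EuclideanSpace ℝ (Fin m),
      ‖u x - u y‖ ≤ ‖x - y‖ ∧
      (∀ p q : EuclideanSpace ℝ (Fin n), ‖v p - v q‖ ≤ ‖p - q‖) ∧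
      (∀ p ∈ ({x, y} : Set (EuclideanSpace ℝ (Fin n))), ‖u p - v p‖ = δ) ∧
      (∀ uext : EuclideanSpace ℝ (Fin n) → EuclideanSpace ℝ (Fin m),
        (∀ p ∈ ({x, y, z} : Set (EuclideanSpace ℝ (Fin n))),
          ∀ q ∈ ({x, y, z} : Set (EuclideanSpace ℝ (Fin n))),
            ‖uext p - uext q‖ ≤ ‖p - q‖) →
        uext x = u x → uext y = u y →
        ‖v z - uext z‖ = Real.sqrt (δ ^ 2 + 2 * δ * a)) :=
  stmt_3_general n m hm x y z hz a ha δ hδ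
end

section
/- Let w ∈ ℝᵐ be a unit vector, let v : ℝⁿ → ℝᵐ be 1-Lipschitz, and let ũ : ℝⁿ → ℝᵐ be a 1-Lipschitz map with v(x) − ũ(x) ∈ ℝ·w for all x ∈ ℝⁿ. Define d(p, q) = √(‖p − q‖² − ‖v(p) − v(q)‖² + ⟨w, v(p) − v(q)⟩²) (the quantity under the square root is nonnegative since v is 1-Lipschitz). Then for every finite sequence of points x₀, x₁, …, x_k ∈ ℝⁿ one has |⟨ũ(x₀) − ũ(x_k), w⟩| ≤ Σ_{i=0}^{k−1} d(xᵢ, x_{i+1}). -/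
open scoped RealInnerProductSpace

lemma unit_decomp {m : ℕ} (w x : EuclideanSpace ℝ (Fin m)) (hw : ‖w‖ = 1) :
    ‖x‖ ^ 2 = ⟪w, x⟫ ^ 2 + ‖x - ⟪w, x⟫ • w‖ ^ 2 := by
  rw [real_inner_comm x w]
  have h := norm_sub_sq_real x (⟪x, w⟫ • w)
  rw [real_inner_smul_right, norm_smul, hw, Real.norm_eq_abs, mul_one] at h
  rw [h, sq_abs]; ring

lemma one_step {n m : ℕ} (w : EuclideanSpace ℝ (Fin m)) (hw : ‖w‖ = 1)
    (v uext : EuclideanSpace ℝ (Fin n) → EuclideanSpace ℝ (Fin m))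
    (huext : ∀ p q, ‖uext p - uext q‖ ≤ ‖p - q‖)
    (hspan : ∀ p, v p - uext p ∈ Submodule.span ℝ ({w} : Set (EuclideanSpace ℝ (Fin m))))
    (p q : EuclideanSpace ℝ (Fin n)) :
    |⟪uext p - uext q, w⟫| ≤
      Real.sqrt (‖p - q‖ ^ 2 - ‖v p - v q‖ ^ 2 + ⟪w, v p - v q⟫ ^ 2) := by
  obtain ⟨a, ha⟩ := Submodule.mem_span_singleton.1 (hspan p)
  obtain ⟨b, hb⟩ := Submodule.mem_span_singleton.1 (hspan q)
  set U := uext p - uext q with hU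
  set V := v p - v q with hV
  have hUV : U = V - (a - b) • w := by
    rw [hU, hV, sub_smul, ha, hb]; abel
  have hwU : ⟪w, U⟫ = ⟪w, V⟫ - (a - b) := by
    rw [hUV, inner_sub_right, real_inner_smul_right, real_inner_self_eq_norm_sq, hw]
    ring
  have hperp : U - ⟪w, U⟫ • w = V - ⟪w, V⟫ • w := by
    rw [hwU, hUV]; module
  have h1 := unit_decomp w U hw
  have h2 := unit_decomp w V hw
  rw [hperp] at h1
  have hsq : ⟪w, U⟫ ^ 2 ≤ ‖p - q‖ ^ 2 - ‖V‖ ^ 2 + ⟪w, V⟫ ^ 2 := by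
    have hU2 : ‖U‖ ^ 2 ≤ ‖p - q‖ ^ 2 := by
      have := huext p q
      exact pow_le_pow_left₀ (norm_nonneg _) this 2
    nlinarith
  calc |⟪U, w⟫| = Real.sqrt (⟪w, U⟫ ^ 2) := by
        rw [real_inner_comm, Real.sqrt_sq_eq_abs]
    _ ≤ Real.sqrt (‖p - q‖ ^ 2 - ‖V‖ ^ 2 + ⟪w, V⟫ ^ 2) := Real.sqrt_le_sqrt hsq

theorem stmt_5 (n m : ℕ) (w : EuclideanSpace ℝ (Fin m)) (hw : ‖w‖ = 1)
    (v : EuclideanSpace ℝ (Fin n) → EuclideanSpace ℝ (Fin m))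
    (hv : ∀ p q : EuclideanSpace ℝ (Fin n), ‖v p - v q‖ ≤ ‖p - q‖)
    (uext : EuclideanSpace ℝ (Fin n) → EuclideanSpace ℝ (Fin m))
    (huext : ∀ p q : EuclideanSpace ℝ (Fin n), ‖uext p - uext q‖ ≤ ‖p - q‖)
    (hspan : ∀ p : EuclideanSpace ℝ (Fin n),
      v p - uext p ∈ Submodule.span ℝ ({w} : Set (EuclideanSpace ℝ (Fin m))))
    (d : EuclideanSpace ℝ (Fin n) → EuclideanSpace ℝ (Fin n) → ℝ)
    (hd : ∀ p q, d p q =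
      Real.sqrt (‖p - q‖ ^ 2 - ‖v p - v q‖ ^ 2 + ⟪w, v p - v q⟫ ^ 2))
    (k : ℕ) (x : ℕ → EuclideanSpace ℝ (Fin n)) :
    |⟪uext (x 0) - uext (x k), w⟫| ≤ ∑ i ∈ Finset.range k, d (x i) (x (i + 1)) := by
  induction k with
  | zero => simp
  | succ k ih =>
    rw [Finset.sum_range_succ]
    have key : |⟪uext (x k) - uext (x (k + 1)), w⟫| ≤ d (x k) (x (k + 1)) := by
      rw [hd]; exact one_step w hw v uext huext hspan _ _
    have split : uext (x 0) - uext (x (k + 1)) =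
        (uext (x 0) - uext (x k)) + (uext (x k) - uext (x (k + 1))) := by abel
    rw [split, inner_add_left]
    exact le_trans (abs_add_le _ _) (add_le_add ih key)
end

section
/- Let (X, ρ) be a pseudometric space, let f : X → ℝ satisfy |f(x) − f(y)| ≤ ρ(x, y) for all x, y ∈ X, let A ⊆ X, let t : A → ℝ satisfy |t(x) − t(y)| ≤ ρ(x, y) for all x, y ∈ A, and let δ ≥ 0 satisfy |t(x) − f(x)| ≤ δ for all x ∈ A. Then there exists t̃ : X → ℝ with t̃(x) = t(x) for all x ∈ A, |t̃(x) − t̃(y)| ≤ ρ(x, y) for all x, y ∈ X, and |t̃(x) − f(x)| ≤ δ for all x ∈ X. -/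
theorem stmt_6 {X : Type*} [PseudoMetricSpace X]
    (f : X → ℝ) (hf : ∀ x y : X, |f x - f y| ≤ dist x y)
    (A : Set X) (t : X → ℝ)
    (ht : ∀ x ∈ A, ∀ y ∈ A, |t x - t y| ≤ dist x y)
    (δ : ℝ) (hδ : 0 ≤ δ) (hclose : ∀ x ∈ A, |t x - f x| ≤ δ) :
    ∃ text : X → ℝ,
      (∀ x ∈ A, text x = t x) ∧
      (∀ x y : X, |text x - text y| ≤ dist x y) ∧
      (∀ x : X, |text x - f x| ≤ δ) := by
  rcases A.eq_empty_or_nonempty with rfl | hA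
  · exact ⟨f, by simp, hf, fun x => by simpa using hδ⟩
  haveI : Nonempty A := hA.to_subtype
  set u : X → ℝ := fun x => ⨅ y : A, (t y + dist x y) with hu
  have hbdd : ∀ x : X, BddBelow (Set.range fun y : A => t y + dist x y) := by
    intro x
    refine ⟨f x - δ, ?_⟩
    rintro _ ⟨⟨y, hy⟩, rfl⟩
    have h1 : |t y - f y| ≤ δ := hclose y hy
    have h2 : |f y - f x| ≤ dist y x := hf y x
    have := abs_le.mp h1
    have := abs_le.mp h2
    have hd : dist y x = dist x y := dist_comm y x
    simp only
    linarith
  have hulip : ∀ x y : X, u x ≤ u y + dist x y := by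
    intro x y
    rw [← sub_le_iff_le_add]
    refine le_ciInf fun ⟨z, hz⟩ => ?_
    have h1 : u x ≤ t z + dist x z := ciInf_le (hbdd x) ⟨z, hz⟩
    have h2 : dist x z ≤ dist x y + dist y z := dist_triangle x y z
    simp only at h1 ⊢
    linarith
  have habs : ∀ x y : X, |u x - u y| ≤ dist x y := by
    intro x y
    rw [abs_sub_le_iff]
    constructor
    · have := hulip x y; linarith
    · have := hulip y x; rw [dist_comm] at this; linarith
  have huA : ∀ x ∈ A, u x = t x := by
    intro x hx
    apply le_antisymm
    · simpa using ciInf_le (hbdd x) ⟨x, hx⟩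
    · refine le_ciInf fun ⟨z, hz⟩ => ?_
      have := abs_le.mp (ht x hx z hz)
      have hd : dist z x ≤ dist x z := (dist_comm z x).le
      simp only
      linarith [this.2, dist_comm x z ▸ le_refl (dist x z)]
  have hlb : ∀ x : X, f x - δ ≤ u x := by
    intro x
    refine le_ciInf fun ⟨z, hz⟩ => ?_
    have h1 := abs_le.mp (hclose z hz)
    have h2 := abs_le.mp (hf z x)
    have hd : dist z x = dist x z := dist_comm z x
    simp only
    linarith
  refine ⟨fun x => min (max (u x) (f x - δ)) (f x + δ), ?_, ?_, ?_⟩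
  · intro x hx
    have h := abs_le.mp (hclose x hx)
    simp only
    rw [huA x hx]
    rw [max_eq_left (by linarith), min_eq_left (by linarith)]
  · intro x y
    have h1 : |max (u x) (f x - δ) - max (u y) (f y - δ)| ≤ dist x y := by
      refine (abs_max_sub_max_le_max _ _ _ _).trans (max_le (habs x y) ?_)
      have := abs_le.mp (hf x y)
      rw [abs_le]; constructor <;> linarith
    refine (abs_min_sub_min_le_max _ _ _ _).trans (max_le h1 ?_)
    have := abs_le.mp (hf x y)
    rw [abs_le]; constructor <;> linarith
  · intro x
    have h1 : f x - δ ≤ max (u x) (f x - δ) := le_max_right _ _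
    rw [abs_le]
    constructor
    · have : f x - δ ≤ min (max (u x) (f x - δ)) (f x + δ) :=
        le_min h1 (by linarith)
      linarith
    · have : min (max (u x) (f x - δ)) (f x + δ) ≤ f x + δ := min_le_right _ _
      linarith
end

section
/- Let v : ℝⁿ → ℝ be a 1-Lipschitz function, let A ⊆ ℝⁿ, let u : A → ℝ be a 1-Lipschitz function, and let δ ≥ 0 satisfy |u(x) − v(x)| ≤ δ for all x ∈ A. Then there exists a 1-Lipschitz function ũ : ℝⁿ → ℝ with ũ(x) = u(x) for all x ∈ A and |v(x) − ũ(x)| ≤ δ for all x ∈ ℝⁿ. -/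
theorem stmt_7 (n : ℕ) (v : EuclideanSpace ℝ (Fin n) → ℝ)
    (hv : ∀ x y : EuclideanSpace ℝ (Fin n), |v x - v y| ≤ ‖x - y‖)
    (A : Set (EuclideanSpace ℝ (Fin n))) (u : EuclideanSpace ℝ (Fin n) → ℝ)
    (hu : ∀ x ∈ A, ∀ y ∈ A, |u x - u y| ≤ ‖x - y‖)
    (δ : ℝ) (hδ : 0 ≤ δ) (hclose : ∀ x ∈ A, |u x - v x| ≤ δ) :
    ∃ uext : EuclideanSpace ℝ (Fin n) → ℝ,
      (∀ x y : EuclideanSpace ℝ (Fin n), |uext x - uext y| ≤ ‖x - y‖) ∧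
      (∀ x ∈ A, uext x = u x) ∧
      (∀ x : EuclideanSpace ℝ (Fin n), |v x - uext x| ≤ δ) := by
  have huL : LipschitzOnWith 1 u A := by
    rw [lipschitzOnWith_iff_dist_le_mul]
    intro x hx y hy
    simpa [Real.dist_eq, dist_eq_norm] using hu x hx y hy
  obtain ⟨f, hf, hfA⟩ := huL.extend_real
  have hvL : LipschitzWith 1 v := by
    apply LipschitzWith.of_dist_le_mul
    intro x y
    simpa [Real.dist_eq, dist_eq_norm] using hv x y
  set g : EuclideanSpace ℝ (Fin n) → ℝ :=
    fun x => max (v x - δ) (min (v x + δ) (f x)) with hg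
  have hvm : LipschitzWith 1 (fun x => v x - δ) := by
    apply LipschitzWith.of_dist_le_mul
    intro x y
    simpa [Real.dist_eq, dist_eq_norm] using hv x y
  have hvp : LipschitzWith 1 (fun x => v x + δ) := by
    apply LipschitzWith.of_dist_le_mul
    intro x y
    simpa [Real.dist_eq, dist_eq_norm] using hv x y
  have hgL : LipschitzWith 1 g := by
    have h1 : LipschitzWith 1 (fun x => min (v x + δ) (f x)) := by
      simpa using hvp.min hf
    simpa using hvm.max h1
  refine ⟨g, ?_, ?_, ?_⟩
  · intro x y
    simpa [Real.dist_eq, dist_eq_norm] using hgL.dist_le_mul x y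
  · intro x hx
    have hfx : f x = u x := (hfA hx).symm
    have h := abs_le.1 (hclose x hx)
    simp only [hg, hfx]
    rw [min_eq_right (by linarith), max_eq_right (by linarith)]
  · intro x
    have h1 : v x - δ ≤ g x := le_max_left _ _
    have h2 : g x ≤ v x + δ := max_le (by linarith) (min_le_left _ _)
    rw [abs_le]; constructor <;> linarith
end

section
/- (Minty's theorem.) Let Φ : ℝᵐ × ℝⁿ × ℝⁿ → ℝ be a K-function. Let (x₁, y₁), …, (x_l, y_l) ∈ ℝᵐ × ℝⁿ satisfy Φ(xᵢ − xⱼ, yᵢ, yⱼ) ≤ 0 for all i, j = 1, …, l, and let y ∈ ℝⁿ. Then there exists x in the convex hull of {x₁, …, x_l} such that Φ(xᵢ − x, yᵢ, y) ≤ 0 for all i = 1, …, l. -/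
/-- A `K`-function in the sense of Minty: lower semicontinuous and convex in the
first variable, and satisfying the averaging inequality. -/
def IsKFunction (m n : ℕ)
    (Φ : EuclideanSpace ℝ (Fin m) → EuclideanSpace ℝ (Fin n) → EuclideanSpace ℝ (Fin n) → ℝ) :
    Prop :=
  (∀ y y' : EuclideanSpace ℝ (Fin n),
      LowerSemicontinuous (fun x => Φ x y y') ∧
      ConvexOn ℝ Set.univ (fun x => Φ x y y')) ∧
  (∀ (l : ℕ) (x : Fin l → EuclideanSpace ℝ (Fin m))
      (yv : Fin l → EuclideanSpace ℝ (Fin n)) (lam : Fin l → ℝ),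
    (∀ i, 0 ≤ lam i) → (∑ i, lam i = 1) →
    ∀ y : EuclideanSpace ℝ (Fin n),
      ∑ i, ∑ j, lam i * lam j * Φ (x i - x j) (yv i) (yv j) ≥
        2 * ∑ i, lam i * Φ (x i - ∑ j, lam j • x j) (yv i) y)

/-!
Put `g i a = Φ (x i - ∑ j, a j • x j) (yv i) y` for `a` in the standard simplex `Δ`. Each `g i`
is convex, hence continuous, and the `K`-inequality together with
`Φ (x i - x j) (yv i) (yv j) ≤ 0` gives `∑ i, a i * g i a ≤ 0` on `Δ`.
For every `ε > 0` some `a ∈ Δ` has all `g i a < ε`: otherwise the convex set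
`{z | ∃ a ∈ Δ, ∀ i, g i a ≤ z i}` misses the open box `{z | ∀ i, z i < ε}`, which contains `0`.
A separating functional `μ` is bounded above on the box, so `μ ≥ 0`; writing `μ = (∑ μ) • a` with
`a ∈ Δ`, its value at `g a` is `(∑ μ) * ∑ i, a i * g i a ≤ 0`, while separation makes it positive.
Minimising `maxᵢ g i` over the compact set `Δ` then gives a point where all `g i ≤ 0`.
-/

open Finset Set

theorem convex_setOf_exists_forall_le {ι E : Type*} [AddCommGroup E] [Module ℝ E] {s : Set E}
    (hs : Convex ℝ s) {g : ι → E → ℝ} (hg : ∀ i, ConvexOn ℝ s (g i)) :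
    Convex ℝ {z : ι → ℝ | ∃ a ∈ s, ∀ i, g i a ≤ z i} := by
  rintro z ⟨a, ha, hz⟩ w ⟨b, hb, hw⟩ p q hp hq hpq
  refine ⟨p • a + q • b, hs ha hb hp hq hpq, fun i => ?_⟩
  calc g i (p • a + q • b) ≤ p * g i a + q * g i b := (hg i).2 ha hb hp hq hpq
    _ ≤ p * z i + q * w i := by gcongr <;> simp_all
    _ = (p • z + q • w) i := by simp

theorem LinearMap.apply_single_nonneg_of_bddAbove {ι : Type*} [DecidableEq ι]
    (f : (ι → ℝ) →ₗ[ℝ] ℝ) {ε : ℝ} (hf : BddAbove (f '' univ.pi fun _ => Iio ε)) (i : ι) :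
    0 ≤ f (Pi.single i 1) := by
  obtain ⟨u, hu⟩ := hf
  by_contra! hneg
  set c : ι → ℝ := fun _ => ε - 1
  have hc : f c ≤ u := hu ⟨c, fun _ _ => by simp [c], rfl⟩
  set t := (u - f c + 1) / -f (Pi.single i 1)
  have ht : 0 < t := div_pos (by linarith) (by linarith)
  have hmem : c - t • Pi.single i 1 ∈ univ.pi fun _ => Iio ε := by
    intro j _
    rcases eq_or_ne j i with rfl | hj
    · simp only [Pi.sub_apply, Pi.smul_apply, Pi.single_eq_same, smul_eq_mul, Set.mem_Iio, c]
      linarith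
    · simp [c, hj]
  have hbound := hu ⟨_, hmem, rfl⟩
  have ht' : t * -f (Pi.single i 1) = u - f c + 1 := div_mul_cancel₀ _ (neg_ne_zero.2 hneg.ne)
  rw [map_sub, map_smul, smul_eq_mul] at hbound
  linarith

section StdSimplex

variable {ι : Type*} [Fintype ι]

theorem exists_mem_stdSimplex_smul_eq [Nonempty ι] {μ : ι → ℝ} (hμ : 0 ≤ μ) :
    ∃ a ∈ stdSimplex ℝ ι, (∑ i, μ i) • a = μ := by
  classical
  rcases (sum_nonneg fun i _ => hμ i).eq_or_lt with hs | hs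
  · obtain ⟨i⟩ := ‹Nonempty ι›
    refine ⟨Pi.single i 1, single_mem_stdSimplex ℝ i, ?_⟩
    rw [← hs, zero_smul, eq_comm]
    exact (Fintype.sum_eq_zero_iff_of_nonneg hμ).1 hs.symm
  · refine ⟨(∑ i, μ i)⁻¹ • μ, ⟨fun i => ?_, ?_⟩, ?_⟩
    · exact mul_nonneg (inv_nonneg.2 hs.le) (hμ i)
    · simp [← mul_sum, hs.ne']
    · rw [smul_smul, mul_inv_cancel₀ hs.ne', one_smul]

theorem exists_mem_stdSimplex_forall_lt_of_sum_mul_nonpos [Nonempty ι] {g : ι → (ι → ℝ) → ℝ}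
    (hg : ∀ i, ConvexOn ℝ (stdSimplex ℝ ι) (g i))
    (hsum : ∀ a ∈ stdSimplex ℝ ι, ∑ i, a i * g i a ≤ 0) {ε : ℝ} (hε : 0 < ε) :
    ∃ a ∈ stdSimplex ℝ ι, ∀ i, g i a < ε := by
  classical
  by_contra! h
  set U : Set (ι → ℝ) := univ.pi fun _ => Iio ε
  have hdisj : Disjoint U {z | ∃ a ∈ stdSimplex ℝ ι, ∀ i, g i a ≤ z i} := by
    refine Set.disjoint_left.2 fun z hz ⟨a, ha, hle⟩ => ?_
    obtain ⟨i, hi⟩ := h a ha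
    exact (hi.trans (hle i)).not_gt (hz i (mem_univ i))
  obtain ⟨f, u, hfU, hfC⟩ := geometric_hahn_banach_open (convex_pi fun _ _ => convex_Iio ε)
    (isOpen_set_pi finite_univ fun _ _ => isOpen_Iio)
    (convex_setOf_exists_forall_le (convex_stdSimplex ℝ ι) hg) hdisj
  set μ : ι → ℝ := fun i => f (Pi.single i 1)
  have hf : ∀ z, f z = ∑ i, z i * μ i := fun z => by
    conv_lhs => rw [← univ_sum_single z]
    rw [map_sum]
    refine sum_congr rfl fun i _ => ?_
    rw [← smul_eq_mul, ← map_smul, ← Pi.single_smul', smul_eq_mul, mul_one]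
  have hμ : 0 ≤ μ := f.toLinearMap.apply_single_nonneg_of_bddAbove
    ⟨u, forall_mem_image.2 fun z hz => (hfU z hz).le⟩
  obtain ⟨a, ha, hμa⟩ := exists_mem_stdSimplex_smul_eq hμ
  have hu : 0 < u := by simpa using hfU 0 fun i _ => hε
  refine hu.not_ge ?_
  calc u ≤ f fun i => g i a := hfC _ ⟨a, ha, fun _ => le_rfl⟩
    _ = (∑ i, μ i) * ∑ i, a i * g i a := by
      rw [hf, mul_sum]
      refine sum_congr rfl fun i _ => ?_
      rw [← congrFun hμa i, Pi.smul_apply, smul_eq_mul]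
      ring
    _ ≤ 0 := mul_nonpos_of_nonneg_of_nonpos (sum_nonneg fun i _ => hμ i) (hsum a ha)

theorem exists_mem_stdSimplex_forall_nonpos_of_sum_mul_nonpos [Nonempty ι]
    {g : ι → (ι → ℝ) → ℝ} (hg : ∀ i, ConvexOn ℝ (stdSimplex ℝ ι) (g i))
    (hgc : ∀ i, Continuous (g i)) (hsum : ∀ a ∈ stdSimplex ℝ ι, ∑ i, a i * g i a ≤ 0) :
    ∃ a ∈ stdSimplex ℝ ι, ∀ i, g i a ≤ 0 := by
  classical
  set G : (ι → ℝ) → ℝ := fun a => univ.sup' univ_nonempty fun i => g i a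
  obtain ⟨a, ha, hmin⟩ := (isCompact_stdSimplex ℝ ι).exists_isMinOn
    ⟨_, single_mem_stdSimplex ℝ (Classical.arbitrary ι)⟩
    (Continuous.finset_sup'_apply univ_nonempty fun i _ => hgc i).continuousOn
  refine ⟨a, ha, fun i => le_of_forall_pos_lt_add fun ε hε => ?_⟩
  obtain ⟨b, hb, hlt⟩ := exists_mem_stdSimplex_forall_lt_of_sum_mul_nonpos hg hsum hε
  calc g i a ≤ G a := le_sup' (fun i => g i a) (mem_univ i)
    _ ≤ G b := hmin hb
    _ < 0 + ε := by simpa [G, sup'_lt_iff] using hlt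

end StdSimplex

namespace IsKFunction

variable {m n : ℕ}
  {Φ : EuclideanSpace ℝ (Fin m) → EuclideanSpace ℝ (Fin n) → EuclideanSpace ℝ (Fin n) → ℝ}

theorem convexOn_sub_sum_smul (hΦ : IsKFunction m n Φ) {ι : Type*} [Fintype ι]
    (x : ι → EuclideanSpace ℝ (Fin m)) (x₀ : EuclideanSpace ℝ (Fin m))
    (y y' : EuclideanSpace ℝ (Fin n)) :
    ConvexOn ℝ univ fun a : ι → ℝ => Φ (x₀ - ∑ j, a j • x j) y y' :=
  (hΦ.1 y y').2.comp_affineMap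
    (AffineMap.const ℝ (ι → ℝ) x₀ - (Fintype.linearCombination ℝ x).toAffineMap)

theorem sum_mul_nonpos (hΦ : IsKFunction m n Φ) {l : ℕ} {x : Fin l → EuclideanSpace ℝ (Fin m)}
    {yv : Fin l → EuclideanSpace ℝ (Fin n)} (hxy : ∀ i j, Φ (x i - x j) (yv i) (yv j) ≤ 0)
    (y : EuclideanSpace ℝ (Fin n)) {a : Fin l → ℝ} (ha : a ∈ stdSimplex ℝ (Fin l)) :
    ∑ i, a i * Φ (x i - ∑ j, a j • x j) (yv i) y ≤ 0 := by
  have hpairs : ∑ i, ∑ j, a i * a j * Φ (x i - x j) (yv i) (yv j) ≤ 0 :=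
    sum_nonpos fun i _ => sum_nonpos fun j _ =>
      mul_nonpos_of_nonneg_of_nonpos (mul_nonneg (ha.1 i) (ha.1 j)) (hxy i j)
  linarith [hΦ.2 l x yv a ha.1 ha.2 y]

end IsKFunction

theorem stmt_8 (m n : ℕ)
    (Φ : EuclideanSpace ℝ (Fin m) → EuclideanSpace ℝ (Fin n) → EuclideanSpace ℝ (Fin n) → ℝ)
    (hΦ : IsKFunction m n Φ)
    (l : ℕ) (hl : 0 < l)
    (x : Fin l → EuclideanSpace ℝ (Fin m)) (yv : Fin l → EuclideanSpace ℝ (Fin n))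
    (hxy : ∀ i j, Φ (x i - x j) (yv i) (yv j) ≤ 0)
    (y : EuclideanSpace ℝ (Fin n)) :
    ∃ x₀ ∈ convexHull ℝ (Set.range x), ∀ i, Φ (x i - x₀) (yv i) y ≤ 0 := by
  have : Nonempty (Fin l) := ⟨⟨0, hl⟩⟩
  have hconv (i : Fin l) := hΦ.convexOn_sub_sum_smul x (x i) (yv i) y
  obtain ⟨a, ha, hle⟩ := exists_mem_stdSimplex_forall_nonpos_of_sum_mul_nonpos
    (fun i => (hconv i).subset (subset_univ _) (convex_stdSimplex ℝ _))
    (fun i => continuousOn_univ.1 ((hconv i).continuousOn isOpen_univ))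
    (fun a ha => hΦ.sum_mul_nonpos hxy y ha)
  exact ⟨∑ j, a j • x j, (convex_convexHull ℝ _).sum_mem (fun j _ => ha.1 j) ha.2
    (fun j _ => subset_convexHull ℝ _ ⟨j, rfl⟩), hle⟩
end

section
/- Let v : ℝⁿ → ℝᵐ be an affine 1-Lipschitz map. Then for every nonempty subset A ⊆ ℝⁿ and every 1-Lipschitz map u : A → ℝᵐ there exists a 1-Lipschitz map ũ : ℝⁿ → ℝᵐ with ũ(x) = u(x) for all x ∈ A and v(x) − ũ(x) ∈ closure(convexHull{v(z) − u(z) : z ∈ A}) for all x ∈ ℝⁿ. -/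
/-!
For finitely many points `p i` with values `g i`, finding `y` with `‖y - g i‖ ≤ ‖x - p i‖` for all
`i` and `V x - y` in the convex hull of the `V (p i) - g i` is a convex feasibility problem, so by
a theorem of alternatives (Hahn–Banach in `ℝ^ι`) it suffices to satisfy each weighted sum of the
constraints. For weights `w` the point `y = V x - ∑ w j • (V (p j) - g j)` does: with
`p̄ = ∑ w j • p j`, the parallel-axis identity gives
`∑ w i ‖y - g i‖² = ‖V x - V p̄‖² + Var_w g ≤ ‖x - p̄‖² + Var_w p = ∑ w i ‖x - p i‖²`,
since `V` is affine and 1-Lipschitz and a weighted variance is half the weighted sum of squared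
pairwise distances. Compactness of closed balls passes to infinitely many points, and Zorn's
lemma on 1-Lipschitz graphs extends `u` to the whole space one point at a time.
-/

open Finset Pointwise RealInnerProductSpace

theorem nonneg_of_forall_lt_add_mul {a b c : ℝ} (h : ∀ s : ℝ, 0 ≤ s → c < a + s * b) : 0 ≤ b := by
  by_contra! hb
  have := h ((a - c) / -b) (div_nonneg (by linarith [h 0 le_rfl]) (by linarith))
  rw [div_mul_eq_mul_div, div_neg, mul_div_assoc, div_self hb.ne] at this
  linarith

section TheoremOfAlternatives
variable {F : Type*} [AddCommGroup F] [Module ℝ F] {ι : Type*}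

theorem convex_image_add_Ici {D : Set F} (hD : Convex ℝ D) {Φ : ι → F → ℝ}
    (hconv : ∀ i, ConvexOn ℝ D (Φ i)) :
    Convex ℝ ((fun y i => Φ i y) '' D + Set.Ici 0) := by
  rintro _ ⟨_, ⟨y₁, hy₁, rfl⟩, t₁, ht₁, rfl⟩ _ ⟨_, ⟨y₂, hy₂, rfl⟩, t₂, ht₂, rfl⟩ a b ha hb hab
  refine ⟨_, ⟨a • y₁ + b • y₂, hD hy₁ hy₂ ha hb hab, rfl⟩, _, fun i => ?_, add_sub_cancel _ _⟩
  have := (hconv i).2 hy₁ hy₂ ha hb hab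
  have := mul_nonneg ha (ht₁ i)
  have := mul_nonneg hb (ht₂ i)
  simp only [Pi.zero_apply, Pi.sub_apply, Pi.add_apply, Pi.smul_apply, smul_eq_mul] at *
  linarith

theorem exists_forall_nonpos_of_forall_sum_mul_nonpos [TopologicalSpace F] [Fintype ι]
    {D : Set F} (hD : Convex ℝ D) (hDc : IsCompact D) (hDne : D.Nonempty) {Φ : ι → F → ℝ}
    (hconv : ∀ i, ConvexOn ℝ D (Φ i)) (hcont : ∀ i, ContinuousOn (Φ i) D)
    (h : ∀ w : ι → ℝ, (∀ i, 0 ≤ w i) → ∑ i, w i = 1 → ∃ y ∈ D, ∑ i, w i * Φ i y ≤ 0) :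
    ∃ y ∈ D, ∀ i, Φ i y ≤ 0 := by
  classical
  by_contra hcon
  set U : Set (ι → ℝ) := (fun y i => Φ i y) '' D + Set.Ici 0
  have hU : ∀ y ∈ D, ∀ t, 0 ≤ t → (fun i => Φ i y) + t ∈ U := fun y hy t ht =>
    Set.add_mem_add ⟨y, hy, rfl⟩ ht
  have hU0 : (0 : ι → ℝ) ∉ U := by
    rintro ⟨_, ⟨y, hy, rfl⟩, t, ht, hyt⟩
    refine hcon ⟨y, hy, fun i => ?_⟩
    have := congrFun hyt i
    simp only [Pi.add_apply, Pi.zero_apply] at this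
    linarith [show (0 : ℝ) ≤ t i from ht i]
  obtain ⟨f, c, hf0, hfU⟩ := geometric_hahn_banach_point_closed (convex_image_add_Ici hD hconv)
    (isClosed_Ici.add_left_of_isCompact (hDc.image_of_continuousOn (continuousOn_pi.2 hcont)))
    hU0
  rw [map_zero] at hf0
  set lam : ι → ℝ := fun i => f fun j => if i = j then 1 else 0
  have hf : ∀ t, f t = ∑ i, t i * lam i := f.toLinearMap.pi_apply_eq_sum_univ
  obtain ⟨y₀, hy₀⟩ := hDne
  have hc : c < f fun i => Φ i y₀ := by simpa using hfU _ (hU y₀ hy₀ 0 le_rfl)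
  -- `f` is bounded below on `U`, which is stable under adding nonnegative vectors.
  have hlam : ∀ i, 0 ≤ lam i := fun i => nonneg_of_forall_lt_add_mul fun s hs => by
    have := hfU _ (hU y₀ hy₀ (s • fun j => if i = j then 1 else 0) fun j => by
      simp only [Pi.zero_apply, Pi.smul_apply, smul_eq_mul]
      split_ifs <;> simp [hs])
    rwa [map_add, map_smul, smul_eq_mul] at this
  have hΛ : 0 < ∑ i, lam i := by
    refine (sum_nonneg fun i _ => hlam i).lt_of_ne fun hΛ => ?_
    have hz := (sum_eq_zero_iff_of_nonneg fun i _ => hlam i).1 hΛ.symm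
    simp only [hf, mem_univ, hz, mul_zero, sum_const_zero] at hc
    linarith
  obtain ⟨y, hy, hsum⟩ := h (fun i => lam i / ∑ j, lam j) (fun i => div_nonneg (hlam i) hΛ.le)
    (by rw [← sum_div, div_self hΛ.ne'])
  have hfy : c < ∑ i, Φ i y * lam i := by simpa [hf] using hfU _ (hU y hy 0 le_rfl)
  have : (∑ i, Φ i y * lam i) / ∑ j, lam j ≤ 0 := by
    rw [sum_div]
    convert hsum using 2 with i
    ring
  linarith [div_pos (hf0.trans hfy) hΛ]

end TheoremOfAlternatives

section WeightedVariance
variable {E : Type*} [NormedAddCommGroup E] [InnerProductSpace ℝ E] {ι : Type*} [Fintype ι]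
  {w : ι → ℝ}

theorem sum_mul_norm_sub_sq_eq (hw : ∑ i, w i = 1) (z : ι → E) (c : E) :
    ∑ i, w i * ‖c - z i‖ ^ 2
      = ‖c - ∑ j, w j • z j‖ ^ 2 + ∑ i, w i * ‖(∑ j, w j • z j) - z i‖ ^ 2 := by
  set z₀ := ∑ j, w j • z j
  have hcross : ∑ i, w i * ⟪c - z₀, z₀ - z i⟫ = 0 := by
    have hz₀ : ∑ i, w i • (z₀ - z i) = 0 := by
      simp [smul_sub, sum_sub_distrib, ← sum_smul, hw, z₀]
    simp_rw [← real_inner_smul_right, ← inner_sum, hz₀, inner_zero_right]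
  calc ∑ i, w i * ‖c - z i‖ ^ 2
      = ∑ i, (w i * ‖c - z₀‖ ^ 2 + 2 * (w i * ⟪c - z₀, z₀ - z i⟫) + w i * ‖z₀ - z i‖ ^ 2) := by
        refine sum_congr rfl fun i _ => ?_
        rw [← sub_add_sub_cancel c z₀ (z i), norm_add_sq_real]
        ring
    _ = ‖c - z₀‖ ^ 2 + ∑ i, w i * ‖z₀ - z i‖ ^ 2 := by
        rw [sum_add_distrib, sum_add_distrib, ← sum_mul, hw, ← mul_sum, hcross]
        ring

theorem sum_mul_norm_sum_smul_sub_sq_eq (hw : ∑ i, w i = 1) (z : ι → E) :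
    ∑ i, w i * ‖(∑ j, w j • z j) - z i‖ ^ 2 = (∑ i, ∑ j, w i * w j * ‖z i - z j‖ ^ 2) / 2 := by
  set z₀ := ∑ j, w j • z j
  rw [eq_div_iff two_ne_zero, eq_comm]
  calc ∑ i, ∑ j, w i * w j * ‖z i - z j‖ ^ 2
      = ∑ i, w i * (‖z i - z₀‖ ^ 2 + ∑ j, w j * ‖z₀ - z j‖ ^ 2) := by
        simp_rw [mul_assoc, ← mul_sum]
        exact sum_congr rfl fun i _ => by rw [sum_mul_norm_sub_sq_eq hw]
    _ = (∑ i, w i * ‖z₀ - z i‖ ^ 2) * 2 := by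
        simp_rw [mul_add, sum_add_distrib, ← sum_mul, hw, norm_sub_rev (z _) z₀]
        ring

theorem sum_mul_norm_sum_smul_sub_sq_le {F : Type*} [NormedAddCommGroup F] [InnerProductSpace ℝ F]
    (hw₀ : ∀ i, 0 ≤ w i) (hw : ∑ i, w i = 1) {z : ι → E} {z' : ι → F}
    (hz : ∀ i j, ‖z i - z j‖ ≤ ‖z' i - z' j‖) :
    ∑ i, w i * ‖(∑ j, w j • z j) - z i‖ ^ 2 ≤ ∑ i, w i * ‖(∑ j, w j • z' j) - z' i‖ ^ 2 := by
  rw [sum_mul_norm_sum_smul_sub_sq_eq hw, sum_mul_norm_sum_smul_sub_sq_eq hw]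
  gcongr with i _ j _
  · exact mul_nonneg (hw₀ i) (hw₀ j)
  · exact hz i j

end WeightedVariance

section OnePointExtension
variable {E F : Type*} [NormedAddCommGroup E] [InnerProductSpace ℝ E]
  [NormedAddCommGroup F] [InnerProductSpace ℝ F] {ι : Type*} (V : E →ᵃ[ℝ] F) {p : ι → E}
  {g : ι → F}

theorem sum_mul_norm_sub_sq_le [Fintype ι] (hV : ∀ x y, ‖V x - V y‖ ≤ ‖x - y‖)
    (hg : ∀ i j, ‖g i - g j‖ ≤ ‖p i - p j‖) {w : ι → ℝ} (hw₀ : ∀ i, 0 ≤ w i)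
    (hw : ∑ i, w i = 1) (x : E) :
    ∑ i, w i * ‖V x - ∑ j, w j • (V (p j) - g j) - g i‖ ^ 2 ≤ ∑ i, w i * ‖x - p i‖ ^ 2 := by
  have hVp : ∑ j, w j • V (p j) = V (∑ j, w j • p j) := by
    rw [← affineCombination_eq_linear_combination _ _ _ hw,
      ← affineCombination_eq_linear_combination _ _ _ hw, map_affineCombination _ _ _ hw]
    rfl
  have hy : V x - ∑ j, w j • (V (p j) - g j) - ∑ j, w j • g j = V x - V (∑ j, w j • p j) := by
    simp only [smul_sub, sum_sub_distrib, hVp]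
    abel
  rw [sum_mul_norm_sub_sq_eq hw g, sum_mul_norm_sub_sq_eq hw p x, hy]
  gcongr ?_ + ?_
  · exact pow_le_pow_left₀ (norm_nonneg _) (hV _ _) 2
  · exact sum_mul_norm_sum_smul_sub_sq_le hw₀ hw hg

theorem exists_norm_sub_le_of_finite [Fintype ι] [Nonempty ι] (hV : ∀ x y, ‖V x - V y‖ ≤ ‖x - y‖)
    (hg : ∀ i j, ‖g i - g j‖ ≤ ‖p i - p j‖) (x : E) :
    ∃ y, (∀ i, ‖y - g i‖ ≤ ‖x - p i‖) ∧
      V x - y ∈ convexHull ℝ (Set.range fun i => V (p i) - g i) := by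
  have hH := convex_convexHull ℝ (Set.range fun i => V (p i) - g i)
  obtain ⟨c, hcH, hc⟩ := exists_forall_nonpos_of_forall_sum_mul_nonpos hH
    ((Set.finite_range _).isCompact_convexHull ℝ) (Set.range_nonempty _).convexHull
    (Φ := fun i c => dist c (V x - g i) ^ 2 - ‖x - p i‖ ^ 2)
    (fun i => ((convexOn_dist _ hH).pow (fun _ _ => dist_nonneg) 2).sub (concaveOn_const _ hH))
    (fun i => by fun_prop)
    (fun w hw₀ hw => ⟨∑ j, w j • (V (p j) - g j),
      hH.sum_mem (fun i _ => hw₀ i) hw fun i _ => subset_convexHull ℝ _ ⟨i, rfl⟩, by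
        simp only [mul_sub, sum_sub_distrib, sub_nonpos, dist_eq_norm]
        convert sum_mul_norm_sub_sq_le V hV hg hw₀ hw x using 4 with i
        rw [norm_sub_rev, sub_right_comm]⟩)
  refine ⟨V x - c, fun i => ?_, by rwa [sub_sub_cancel]⟩
  have := hc i
  rw [dist_eq_norm, sub_nonpos, pow_le_pow_iff_left₀ (norm_nonneg _) (norm_nonneg _) two_ne_zero]
    at this
  rwa [sub_right_comm, norm_sub_rev]

theorem exists_norm_sub_le [ProperSpace F] [Nonempty ι] (hV : ∀ x y, ‖V x - V y‖ ≤ ‖x - y‖)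
    (hg : ∀ i j, ‖g i - g j‖ ≤ ‖p i - p j‖) (x : E) :
    ∃ y, (∀ i, ‖y - g i‖ ≤ ‖x - p i‖) ∧
      V x - y ∈ closure (convexHull ℝ (Set.range fun i => V (p i) - g i)) := by
  classical
  set C := closure (convexHull ℝ (Set.range fun i => V (p i) - g i))
  set Z : ι → Set F := fun i => Metric.closedBall (g i) ‖x - p i‖ ∩ (V x - ·) ⁻¹' C
  have hC : IsClosed ((V x - ·) ⁻¹' C) := isClosed_closure.preimage (by fun_prop)
  obtain ⟨i₀⟩ := ‹Nonempty ι›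
  have hfin : ∀ u : Finset ι, (Z i₀ ∩ ⋂ i ∈ u, Z i).Nonempty := by
    intro u
    have : Nonempty (insert i₀ u : Finset ι) := ⟨⟨i₀, mem_insert_self _ _⟩⟩
    obtain ⟨y, hy, hyC⟩ := exists_norm_sub_le_of_finite V
      (p := fun i : (insert i₀ u : Finset ι) => p i) (g := fun i => g i) hV (fun i j => hg i j) x
    have hyZ : ∀ i ∈ insert i₀ u, y ∈ Z i := fun i hi => by
      refine ⟨by simpa [dist_eq_norm] using hy ⟨i, hi⟩, subset_closure (convexHull_mono ?_ hyC)⟩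
      rintro _ ⟨j, rfl⟩
      exact ⟨j, rfl⟩
    exact ⟨y, hyZ i₀ (mem_insert_self _ _),
      Set.mem_iInter₂.2 fun i hi => hyZ i (mem_insert_of_mem hi)⟩
  obtain ⟨y, -, hy⟩ := ((isCompact_closedBall (g i₀) _).inter_right hC).inter_iInter_nonempty Z
    (fun i => Metric.isClosed_closedBall.inter hC) hfin
  simp only [Set.mem_iInter, Set.mem_inter_iff, Metric.mem_closedBall, dist_eq_norm,
    Set.mem_preimage, Z] at hy
  exact ⟨y, fun i => (hy i).1, (hy i₀).2⟩

end OnePointExtension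

section Graph
variable {E F : Type*} [SeminormedAddCommGroup E] [SeminormedAddCommGroup F]

/-- Partial 1-Lipschitz maps, encoded by their graphs; the condition forces the graph to be the
graph of a function. -/
def IsOneLipschitzGraph (G : Set (E × F)) : Prop :=
  ∀ a ∈ G, ∀ b ∈ G, ‖a.2 - b.2‖ ≤ ‖a.1 - b.1‖

theorem IsOneLipschitzGraph.sUnion {c : Set (Set (E × F))} (hc : IsChain (· ⊆ ·) c)
    (h : ∀ G ∈ c, IsOneLipschitzGraph G) : IsOneLipschitzGraph (⋃₀ c) := by
  rintro a ⟨G₁, hG₁, ha⟩ b ⟨G₂, hG₂, hb⟩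
  rcases hc.total hG₁ hG₂ with h₁₂ | h₂₁
  · exact h G₂ hG₂ a (h₁₂ ha) b hb
  · exact h G₁ hG₁ a ha b (h₂₁ hb)

theorem IsOneLipschitzGraph.insert {G : Set (E × F)} (hG : IsOneLipschitzGraph G) {x : E} {y : F}
    (hxy : ∀ b ∈ G, ‖y - b.2‖ ≤ ‖x - b.1‖) : IsOneLipschitzGraph (insert (x, y) G) := by
  rintro a (rfl | ha) b (rfl | hb)
  · simp
  · exact hxy b hb
  · rw [norm_sub_rev, norm_sub_rev a.1]
    exact hxy a ha
  · exact hG a ha b hb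

end Graph

section Extension
variable {E F : Type*} [NormedAddCommGroup E] [InnerProductSpace ℝ E]
  [NormedAddCommGroup F] [InnerProductSpace ℝ F] [ProperSpace F]

theorem exists_extension_sub_mem_closure_convexHull (V : E →ᵃ[ℝ] F)
    (hV : ∀ x y, ‖V x - V y‖ ≤ ‖x - y‖) {A : Set E} (hA : A.Nonempty) {u : E → F}
    (hu : ∀ x ∈ A, ∀ y ∈ A, ‖u x - u y‖ ≤ ‖x - y‖) :
    ∃ ũ : E → F, (∀ x y, ‖ũ x - ũ y‖ ≤ ‖x - y‖) ∧ (∀ x ∈ A, ũ x = u x) ∧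
      ∀ x, V x - ũ x ∈ closure (convexHull ℝ ((fun z => V z - u z) '' A)) := by
  set C := closure (convexHull ℝ ((fun z => V z - u z) '' A))
  set S : Set (Set (E × F)) := {G | IsOneLipschitzGraph G ∧ ∀ a ∈ G, V a.1 - a.2 ∈ C}
  have hAS : (fun a => (a, u a)) '' A ∈ S := by
    refine ⟨?_, ?_⟩
    · rintro _ ⟨a, ha, rfl⟩ _ ⟨b, hb, rfl⟩
      exact hu a ha b hb
    · rintro _ ⟨a, ha, rfl⟩
      exact subset_closure (subset_convexHull ℝ _ ⟨a, ha, rfl⟩)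
  obtain ⟨G, hAG, hG⟩ := zorn_subset_nonempty S (fun c hcS hc _ =>
    ⟨⋃₀ c, ⟨.sUnion hc fun G hG => (hcS hG).1, fun a ⟨G, hG, ha⟩ => (hcS hG).2 a ha⟩,
      fun _ => Set.subset_sUnion_of_mem⟩) _ hAS
  have htotal : ∀ x, ∃ y, (x, y) ∈ G := by
    intro x
    by_contra! hx
    obtain ⟨a₀, ha₀⟩ := hA
    have : Nonempty G := ⟨⟨_, hAG ⟨a₀, ha₀, rfl⟩⟩⟩
    obtain ⟨y, hy, hyC⟩ := exists_norm_sub_le V hV (p := fun a : G => a.1.1) (g := fun a => a.1.2)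
      (fun a b => hG.prop.1 a a.2 b b.2) x
    have hCG : closure (convexHull ℝ (Set.range fun a : G => V a.1.1 - a.1.2)) ⊆ C :=
      closure_minimal (convexHull_min (Set.range_subset_iff.2 fun a => hG.prop.2 a a.2)
        (convex_convexHull ℝ _).closure) isClosed_closure
    have := hG.eq_of_subset ⟨hG.prop.1.insert fun b hb => hy ⟨b, hb⟩,
      Set.forall_mem_insert.2 ⟨hCG hyC, hG.prop.2⟩⟩ (Set.subset_insert _ _)
    exact hx y (this ▸ Set.mem_insert _ _)
  choose ũ hũ using htotal
  refine ⟨ũ, fun x y => hG.prop.1 _ (hũ x) _ (hũ y), fun x hx => ?_, fun x => hG.prop.2 _ (hũ x)⟩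
  simpa [sub_eq_zero] using hG.prop.1 _ (hũ x) _ (hAG ⟨x, hx, rfl⟩)

end Extension

theorem stmt_10 (n m : ℕ)
    (v : EuclideanSpace ℝ (Fin n) → EuclideanSpace ℝ (Fin m))
    (hvaff : ∀ x y : EuclideanSpace ℝ (Fin n), ∀ t ∈ Set.Icc (0 : ℝ) 1,
      v (t • x + (1 - t) • y) = t • v x + (1 - t) • v y)
    (hvlip : ∀ x y : EuclideanSpace ℝ (Fin n), ‖v x - v y‖ ≤ ‖x - y‖)
    (A : Set (EuclideanSpace ℝ (Fin n))) (hA : A.Nonempty)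
    (u : EuclideanSpace ℝ (Fin n) → EuclideanSpace ℝ (Fin m))
    (hu : ∀ x ∈ A, ∀ y ∈ A, ‖u x - u y‖ ≤ ‖x - y‖) :
    ∃ uext : EuclideanSpace ℝ (Fin n) → EuclideanSpace ℝ (Fin m),
      (∀ x y : EuclideanSpace ℝ (Fin n), ‖uext x - uext y‖ ≤ ‖x - y‖) ∧
      (∀ x ∈ A, uext x = u x) ∧
      (∀ x : EuclideanSpace ℝ (Fin n),
        v x - uext x ∈ closure (convexHull ℝ ((fun z => v z - u z) '' A))) := by
  have hmid : ∀ x y, v (midpoint ℝ x y) = midpoint ℝ (v x) (v y) := fun x y => by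
    have := hvaff x y 2⁻¹ ⟨by norm_num, by norm_num⟩
    rw [show (1 : ℝ) - 2⁻¹ = 2⁻¹ by norm_num, ← smul_add, ← smul_add] at this
    simpa [midpoint_eq_smul_add] using this
  have hcont : Continuous v := (LipschitzWith.of_dist_le_mul (K := 1) fun x y => by
    simpa [dist_eq_norm] using hvlip x y).continuous
  exact exists_extension_sub_mem_closure_convexHull (.ofMapMidpoint v hmid hcont) hvlip hA hu
end

section
/- Let v : ℝⁿ → ℝᵐ be a map such that for every δ > 0, every subset A ⊆ ℝⁿ, and every 1-Lipschitz map u : A → ℝᵐ with ‖v(x) − u(x)‖ ≤ δ for all x ∈ A, there exists a 1-Lipschitz map ũ : ℝⁿ → ℝᵐ extending u with ‖v(x) − ũ(x)‖ ≤ δ for all x ∈ ℝⁿ. Then v is 1-Lipschitz. -/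
theorem stmt_11 (n m : ℕ)
    (v : EuclideanSpace ℝ (Fin n) → EuclideanSpace ℝ (Fin m))
    (h : ∀ δ : ℝ, 0 < δ → ∀ A : Set (EuclideanSpace ℝ (Fin n)),
      ∀ u : EuclideanSpace ℝ (Fin n) → EuclideanSpace ℝ (Fin m),
        (∀ x ∈ A, ∀ y ∈ A, ‖u x - u y‖ ≤ ‖x - y‖) →
        (∀ x ∈ A, ‖v x - u x‖ ≤ δ) →
        ∃ uext : EuclideanSpace ℝ (Fin n) → EuclideanSpace ℝ (Fin m),
          (∀ x y : EuclideanSpace ℝ (Fin n), ‖uext x - uext y‖ ≤ ‖x - y‖) ∧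
          (∀ x ∈ A, uext x = u x) ∧
          (∀ x : EuclideanSpace ℝ (Fin n), ‖v x - uext x‖ ≤ δ)) :
    ∀ x y : EuclideanSpace ℝ (Fin n), ‖v x - v y‖ ≤ ‖x - y‖ := by
  intro x y
  refine le_of_forall_pos_le_add fun δ hδ => ?_
  obtain ⟨uext, hlip, hagree, hclose⟩ :=
    h δ hδ {x} (fun _ => v x)
      (by intro a ha b hb; simp_all)
      (by intro a ha; simp_all [hδ.le])
  have h1 : uext x = v x := hagree x rfl
  calc ‖v x - v y‖ = ‖(uext x - uext y) + (uext y - v y)‖ := by rw [h1, sub_add_sub_cancel]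
    _ ≤ ‖uext x - uext y‖ + ‖uext y - v y‖ := norm_add_le _ _
    _ ≤ ‖x - y‖ + δ := by
        have := hclose y
        rw [norm_sub_rev] at this
        exact add_le_add (hlip x y) this
end

section
/- Let m ≥ 2 and let v : ℝⁿ → ℝᵐ be a map such that for every δ > 0, every subset A ⊆ ℝⁿ, and every 1-Lipschitz map u : A → ℝᵐ with ‖v(x) − u(x)‖ ≤ δ for all x ∈ A, there exists a 1-Lipschitz map ũ : ℝⁿ → ℝᵐ extending u with ‖v(x) − ũ(x)‖ ≤ δ for all x ∈ ℝⁿ. Then v satisfies the midpoint property: v((x + y)/2) = (v(x) + v(y))/2 for all x, y ∈ ℝⁿ. -/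
open RealInnerProductSpace

/-- Rigidity: if `C` is within `d/2` of both `A` and `B` with `‖A - B‖ = d > 0`,
then `C` is the midpoint. -/
private lemma rigid_mid {F : Type*} [NormedAddCommGroup F] [InnerProductSpace ℝ F]
    {A B C : F} {d : ℝ} (hd : 0 < d) (hAB : ‖A - B‖ = d)
    (hAC : ‖A - C‖ ≤ d / 2) (hCB : ‖C - B‖ ≤ d / 2) :
    C = (1 / 2 : ℝ) • (A + B) := by
  have huv : (A - C) + (C - B) = A - B := by abel
  have h1 : d ≤ ‖A - C‖ + ‖C - B‖ := by
    calc d = ‖A - B‖ := hAB.symm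
      _ = ‖(A - C) + (C - B)‖ := by rw [huv]
      _ ≤ ‖A - C‖ + ‖C - B‖ := norm_add_le _ _
  have hu : ‖A - C‖ = d / 2 := by linarith
  have hv : ‖C - B‖ = d / 2 := by linarith
  have hsq : ‖(A - C) + (C - B)‖ ^ 2
      = ‖A - C‖ ^ 2 + 2 * ⟪A - C, C - B⟫ + ‖C - B‖ ^ 2 := norm_add_sq_real _ _
  rw [huv, hAB, hu, hv] at hsq
  have hinner : ⟪A - C, C - B⟫ = ‖A - C‖ * ‖C - B‖ := by
    rw [hu, hv]; nlinarith
  rw [inner_eq_norm_mul_iff_real, hu, hv] at hinner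
  have heq : A - C = C - B :=
    smul_right_injective F (by positivity : (d / 2 : ℝ) ≠ 0) hinner
  have h2 : A + B = C + C := by
    have := sub_eq_sub_iff_add_eq_add.mp heq
    linear_combination (norm := abel) this
  rw [h2, ← two_smul ℝ C, smul_smul]
  norm_num

/-- In `ℝ^m` with `m ≥ 2` there is a unit vector orthogonal to any given vector. -/
private lemma exists_unit_orth {m : ℕ} (hm : 2 ≤ m) (w : EuclideanSpace ℝ (Fin m)) :
    ∃ g : EuclideanSpace ℝ (Fin m), ‖g‖ = 1 ∧ ⟪g, w⟫ = 0 := by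
  by_cases hw : w = 0
  · refine ⟨EuclideanSpace.single (⟨0, by omega⟩ : Fin m) (1 : ℝ), ?_, ?_⟩
    · simp [EuclideanSpace.norm_single]
    · simp [hw]
  · have hne : (ℝ ∙ w)ᗮ ≠ ⊥ := by
      intro hbot
      rw [Submodule.orthogonal_eq_bot_iff] at hbot
      have h1 : Module.finrank ℝ (ℝ ∙ w) = 1 := finrank_span_singleton hw
      have h2 : Module.finrank ℝ (EuclideanSpace ℝ (Fin m)) = m :=
        finrank_euclideanSpace_fin
      rw [hbot, finrank_top] at h1
      omega
    obtain ⟨g0, hg0mem, hg0ne⟩ := Submodule.exists_mem_ne_zero_of_ne_bot hne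
    refine ⟨(‖g0‖⁻¹ : ℝ) • g0, ?_, ?_⟩
    · rw [norm_smul]
      simp [norm_ne_zero_iff.mpr hg0ne]
    · have : ⟪w, g0⟫ = 0 := hg0mem w (Submodule.mem_span_singleton_self w)
      rw [real_inner_smul_left, real_inner_comm, this, mul_zero]

/-- Norm of an orthogonal combination. -/
private lemma norm_sq_combo {F : Type*} [NormedAddCommGroup F] [InnerProductSpace ℝ F]
    {w g : F} (hg : ‖g‖ = 1) (hgw : ⟪g, w⟫ = 0) (α β : ℝ) :
    ‖α • w + β • g‖ ^ 2 = α ^ 2 * ‖w‖ ^ 2 + β ^ 2 := by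
  have hgw' : ⟪w, g⟫ = 0 := by rw [real_inner_comm]; exact hgw
  rw [norm_add_sq_real, real_inner_smul_left, real_inner_smul_right, hgw',
    norm_smul, norm_smul, hg]
  simp only [mul_zero, mul_pow, sq_abs, Real.norm_eq_abs]
  ring

set_option maxHeartbeats 1000000 in
theorem stmt_12 (n m : ℕ) (hm : 2 ≤ m)
    (v : EuclideanSpace ℝ (Fin n) → EuclideanSpace ℝ (Fin m))
    (h : ∀ δ : ℝ, 0 < δ → ∀ A : Set (EuclideanSpace ℝ (Fin n)),
      ∀ u : EuclideanSpace ℝ (Fin n) → EuclideanSpace ℝ (Fin m),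
        (∀ x ∈ A, ∀ y ∈ A, ‖u x - u y‖ ≤ ‖x - y‖) →
        (∀ x ∈ A, ‖v x - u x‖ ≤ δ) →
        ∃ uext : EuclideanSpace ℝ (Fin n) → EuclideanSpace ℝ (Fin m),
          (∀ x y : EuclideanSpace ℝ (Fin n), ‖uext x - uext y‖ ≤ ‖x - y‖) ∧
          (∀ x ∈ A, uext x = u x) ∧
          (∀ x : EuclideanSpace ℝ (Fin n), ‖v x - uext x‖ ≤ δ)) :
    ∀ x y : EuclideanSpace ℝ (Fin n),
      v ((1 / 2 : ℝ) • (x + y)) = (1 / 2 : ℝ) • (v x + v y) := by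
  classical
  -- Step 1 : v is 1-Lipschitz
  have hlip : ∀ x y, ‖v x - v y‖ ≤ ‖x - y‖ := by
    intro x y
    refine le_of_forall_pos_le_add ?_
    intro δ hδ
    obtain ⟨uext, hL, hA, hclose⟩ := h δ hδ {x} (fun _ => v x)
      (by
        intro p hp q hq
        simp only [Set.mem_singleton_iff] at hp hq
        subst hp; subst hq; simp)
      (by
        intro p hp
        simp only [Set.mem_singleton_iff] at hp
        subst hp; simp [hδ.le])
    have hx : uext x = v x := hA x rfl
    calc ‖v x - v y‖ = ‖(uext x - uext y) + (uext y - v y)‖ := by rw [hx]; congr 1; abel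
      _ ≤ ‖uext x - uext y‖ + ‖uext y - v y‖ := norm_add_le _ _
      _ ≤ ‖x - y‖ + ‖uext y - v y‖ := by gcongr; exact hL x y
      _ ≤ ‖x - y‖ + δ := by
          gcongr
          rw [norm_sub_rev]
          exact hclose y
  intro x y
  by_cases hxy : x = y
  · subst hxy
    have hz : (1 / 2 : ℝ) • (x + x) = x := by
      rw [← two_smul ℝ x, smul_smul]; norm_num
    rw [hz, ← two_smul ℝ (v x), smul_smul]; norm_num
  -- Main case
  set z := (1 / 2 : ℝ) • (x + y) with hzdef
  by_contra hne
  set w : EuclideanSpace ℝ (Fin m) := v z - (1 / 2 : ℝ) • (v x + v y) with hwdef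
  have hw : w ≠ 0 := sub_ne_zero.mpr hne
  have hwn : (0 : ℝ) < ‖w‖ := norm_pos_iff.mpr hw
  set d := ‖x - y‖ with hddef
  have hd : (0 : ℝ) < d := norm_pos_iff.mpr (sub_ne_zero.mpr hxy)
  set e : EuclideanSpace ℝ (Fin m) := v x - v y with hedef
  have he : ‖e‖ ≤ d := hlip x y
  obtain ⟨g, hg1, hgw⟩ := exists_unit_orth hm w
  set κ : ℝ := ⟪e, w⟫ / ‖w‖ ^ 2 with hκdef
  have hew : ⟪e, w⟫ = κ * ‖w‖ ^ 2 := by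
    rw [hκdef]; field_simp
  have hCS : κ ^ 2 * ‖w‖ ^ 2 ≤ d ^ 2 := by
    have h1 : |⟪e, w⟫| ≤ ‖e‖ * ‖w‖ := abs_real_inner_le_norm e w
    have h2 : ⟪e, w⟫ ^ 2 ≤ ‖e‖ ^ 2 * ‖w‖ ^ 2 := by
      nlinarith [abs_nonneg ⟪e, w⟫, sq_abs ⟪e, w⟫]
    have he2 : ‖e‖ ^ 2 ≤ d ^ 2 := by nlinarith [norm_nonneg e]
    have h3 : κ ^ 2 * ‖w‖ ^ 2 * ‖w‖ ^ 2 = ⟪e, w⟫ ^ 2 := by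
      rw [hew]; ring
    nlinarith [mul_le_mul_of_nonneg_right he2 (sq_nonneg ‖w‖), sq_nonneg ‖w‖]
  set t : ℝ := Real.sqrt (d ^ 2 - κ ^ 2 * ‖w‖ ^ 2) / 2 with htdef
  have ht2 : (2 * t) ^ 2 = d ^ 2 - κ ^ 2 * ‖w‖ ^ 2 := by
    rw [htdef, mul_div_cancel₀ _ (two_ne_zero)]
    exact Real.sq_sqrt (by linarith)
  set a : EuclideanSpace ℝ (Fin m) := (κ / 2) • w + t • g - (1 / 2 : ℝ) • e with hadef
  have hkey : e + (2 : ℝ) • a = κ • w + (2 * t) • g := by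
    rw [hadef]; module
  have hea : ‖e + (2 : ℝ) • a‖ = d := by
    have h1 : ‖e + (2 : ℝ) • a‖ ^ 2 = d ^ 2 := by
      rw [hkey, norm_sq_combo hg1 hgw, ht2]; ring
    have h2 := congrArg Real.sqrt h1
    rwa [Real.sqrt_sq (norm_nonneg _), Real.sqrt_sq hd.le] at h2
  have haw : ⟪w, a⟫ = 0 := by
    have hgw' : ⟪w, g⟫ = 0 := by rw [real_inner_comm]; exact hgw
    have hwe : ⟪w, e⟫ = κ * ‖w‖ ^ 2 := by rw [real_inner_comm]; exact hew
    rw [hadef, inner_sub_right, inner_add_right, real_inner_smul_right,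
      real_inner_smul_right, real_inner_smul_right, hgw', hwe,
      real_inner_self_eq_norm_sq]
    ring
  set l : ℝ := (‖a‖ ^ 2 + 1) / ‖w‖ ^ 2 with hldef
  have hl : 0 < l := by positivity
  have hlw : l * ‖w‖ ^ 2 = ‖a‖ ^ 2 + 1 := by
    rw [hldef]; field_simp
  set s : EuclideanSpace ℝ (Fin m) := (-l) • w with hsdef
  set δ : ℝ := Real.sqrt (l ^ 2 * ‖w‖ ^ 2 + ‖a‖ ^ 2) with hδdef
  have hδpos : 0 < δ := Real.sqrt_pos.mpr (by positivity)
  have hδsq : δ ^ 2 = l ^ 2 * ‖w‖ ^ 2 + ‖a‖ ^ 2 := Real.sq_sqrt (by positivity)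
  have hnsa : ∀ c : ℝ, c ^ 2 = 1 → ‖s + c • a‖ = δ := by
    intro c hc
    have h1 : ‖s + c • a‖ ^ 2 = l ^ 2 * ‖w‖ ^ 2 + ‖a‖ ^ 2 := by
      rw [norm_add_sq_real, hsdef, real_inner_smul_left, real_inner_smul_right, haw,
        norm_smul, norm_smul]
      simp only [mul_zero, mul_pow, sq_abs, Real.norm_eq_abs]
      rw [hc]
      ring
    have h2 := congrArg Real.sqrt h1
    rwa [Real.sqrt_sq (norm_nonneg _), ← hδdef] at h2
  -- apply the hypothesis with A = {x, y}
  set u : EuclideanSpace ℝ (Fin n) → EuclideanSpace ℝ (Fin m) :=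
    Function.update (fun _ => v y + s - a) x (v x + s + a) with hudef
  have hux0 : u x = v x + s + a := by rw [hudef]; simp
  have huy0 : ∀ p, p ≠ x → u p = v y + s - a := by
    intro p hp
    rw [hudef, Function.update_of_ne hp]
  have huxy : u x - u y = e + (2 : ℝ) • a := by
    rw [hux0, huy0 y (fun hh => hxy hh.symm), hedef]; module
  obtain ⟨uext, hL, hA, hclose⟩ := h δ hδpos {x, y} u
    (by
      intro p hp q hq
      simp only [Set.mem_insert_iff, Set.mem_singleton_iff] at hp hq
      rcases hp with rfl | rfl <;> rcases hq with rfl | rfl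
      · simp
      · rw [huxy, hea]
      · rw [norm_sub_rev, huxy, hea, norm_sub_rev]
      · simp)
    (by
      intro p hp
      simp only [Set.mem_insert_iff, Set.mem_singleton_iff] at hp
      rcases hp with rfl | rfl
      · have h1 : v p - u p = -(s + (1 : ℝ) • a) := by
          rw [hux0]; module
        rw [h1, norm_neg, hnsa 1 (by norm_num)]
      · have h1 : v p - u p = -(s + (-1 : ℝ) • a) := by
          rw [huy0 p (fun hh : p = x => hxy hh.symm)]; module
        rw [h1, norm_neg, hnsa (-1) (by norm_num)])
  have hux : uext x = v x + s + a := by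
    rw [hA x (by simp), hux0]
  have huy : uext y = v y + s - a := by
    rw [hA y (by simp), huy0 y (fun hh => hxy hh.symm)]
  have hABn : ‖uext x - uext y‖ = d := by
    rw [hux, huy]
    have h1 : v x + s + a - (v y + s - a) = e + (2 : ℝ) • a := by rw [hedef]; module
    rw [h1, hea]
  have hhalf : ‖(1 / 2 : ℝ)‖ = (1 / 2 : ℝ) := by
    rw [Real.norm_eq_abs]; norm_num
  have hxz : ‖x - z‖ = d / 2 := by
    have h1 : x - z = (1 / 2 : ℝ) • (x - y) := by rw [hzdef]; module
    rw [h1, norm_smul, hhalf, hddef]; ring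
  have hzy : ‖z - y‖ = d / 2 := by
    have h1 : z - y = (1 / 2 : ℝ) • (x - y) := by rw [hzdef]; module
    rw [h1, norm_smul, hhalf, hddef]; ring
  have hmid : uext z = (1 / 2 : ℝ) • (uext x + uext y) :=
    rigid_mid hd hABn (le_trans (hL x z) (le_of_eq hxz)) (le_trans (hL z y) (le_of_eq hzy))
  have hvz : v z - uext z = (1 + l) • w := by
    rw [hmid, hux, huy, hsdef, hwdef]
    module
  have hfin : (1 + l) * ‖w‖ ≤ δ := by
    have h1 := hclose z
    rw [hvz, norm_smul, Real.norm_eq_abs, abs_of_pos (by linarith)] at h1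
    exact h1
  have hsq2 : ((1 + l) * ‖w‖) ^ 2 ≤ δ ^ 2 :=
    pow_le_pow_left₀ (by positivity) hfin 2
  rw [hδsq] at hsq2
  nlinarith [sq_nonneg ‖a‖, sq_nonneg ‖w‖]
end

section
/- Let v : ℝⁿ → ℝᵐ be a map and define Φ : ℝᵐ × ℝⁿ × ℝⁿ → ℝ by Φ(x, y, y') = ‖x‖² + 2⟨x, v(y) − v(y')⟩ − ‖y − y'‖² + ‖v(y) − v(y')‖². If Φ satisfies the K-function inequality, i.e. for all points (x₁,y₁), …, (x_l,y_l) ∈ ℝᵐ × ℝⁿ, all weights λ₁, …, λ_l ≥ 0 with Σᵢ λᵢ = 1, and all y ∈ ℝⁿ one has Σ_{i,j} λᵢλⱼ Φ(xᵢ − xⱼ, yᵢ, yⱼ) ≥ 2 Σᵢ λᵢ Φ(xᵢ − Σⱼ λⱼxⱼ, yᵢ, y), then v is affine and 1-Lipschitz. -/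
open scoped RealInnerProductSpace

theorem stmt_14 (n m : ℕ)
    (v : EuclideanSpace ℝ (Fin n) → EuclideanSpace ℝ (Fin m))
    (Φ : EuclideanSpace ℝ (Fin m) → EuclideanSpace ℝ (Fin n) → EuclideanSpace ℝ (Fin n) → ℝ)
    (hΦ : ∀ x y y', Φ x y y' =
      ‖x‖ ^ 2 + 2 * ⟪x, v y - v y'⟫ - ‖y - y'‖ ^ 2 + ‖v y - v y'‖ ^ 2)
    (hK : ∀ (l : ℕ) (x : Fin l → EuclideanSpace ℝ (Fin m))
        (yv : Fin l → EuclideanSpace ℝ (Fin n)) (lam : Fin l → ℝ),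
      (∀ i, 0 ≤ lam i) → (∑ i, lam i = 1) →
      ∀ y : EuclideanSpace ℝ (Fin n),
        ∑ i, ∑ j, lam i * lam j * Φ (x i - x j) (yv i) (yv j) ≥
          2 * ∑ i, lam i * Φ (x i - ∑ j, lam j • x j) (yv i) y) :
    (∀ x y : EuclideanSpace ℝ (Fin n), ∀ t ∈ Set.Icc (0 : ℝ) 1,
      v (t • x + (1 - t) • y) = t • v x + (1 - t) • v y) ∧
    (∀ x y : EuclideanSpace ℝ (Fin n), ‖v x - v y‖ ≤ ‖x - y‖) := by
  have hlip : ∀ x y : EuclideanSpace ℝ (Fin n), ‖v x - v y‖ ≤ ‖x - y‖ := by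
    intro x y
    have H := hK 1 (fun _ => 0) (fun _ => x) (fun _ => 1) (fun _ => zero_le_one)
      (by simp) y
    simp [hΦ, Fin.sum_univ_one, sub_self] at H
    nlinarith [norm_nonneg (x - y), norm_nonneg (v x - v y)]
  refine ⟨?_, hlip⟩
  intro x y t ht
  obtain ⟨ht0, ht1⟩ := ht
  set z : EuclideanSpace ℝ (Fin n) := t • x + (1 - t) • y with hz
  have hnn : ∀ i : Fin 2, 0 ≤ ![t, 1 - t] i := by
    intro i; fin_cases i
    · exact ht0
    · show (0:ℝ) ≤ 1 - t; linarith
  have hsum : ∑ i : Fin 2, ![t, 1 - t] i = 1 := by simp [Fin.sum_univ_two]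
  have H := hK 2 (fun _ => 0) ![x, y] ![t, 1 - t] hnn hsum z
  simp [hΦ, Fin.sum_univ_two, sub_self] at H
  have hxz : x - z = (1 - t) • (x - y) := by rw [hz]; module
  have hyz : y - z = (-t) • (x - y) := by rw [hz]; module
  have hnxz : ‖x - z‖ ^ 2 = (1 - t) ^ 2 * ‖x - y‖ ^ 2 := by
    rw [hxz, norm_smul, Real.norm_eq_abs, abs_of_nonneg (by linarith)]; ring
  have hnyz : ‖y - z‖ ^ 2 = t ^ 2 * ‖x - y‖ ^ 2 := by
    rw [hyz, norm_smul, Real.norm_eq_abs, abs_of_nonpos (by linarith), neg_neg]; ring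
  have hvv : v x - v y = (v x - v z) - (v y - v z) := by abel
  have h1 : ‖v x - v y‖ ^ 2 = ‖v x - v z‖ ^ 2 - 2 * ⟪v x - v z, v y - v z⟫ + ‖v y - v z‖ ^ 2 := by
    rw [hvv]; exact norm_sub_sq_real _ _
  have hvyx : ‖v y - v x‖ ^ 2 = ‖v x - v y‖ ^ 2 := by rw [norm_sub_rev]
  have hyx : ‖y - x‖ ^ 2 = ‖x - y‖ ^ 2 := by rw [norm_sub_rev]
  rw [hvyx, hyx, h1, hnxz, hnyz] at H
  have key : ‖t • (v x - v z) + (1 - t) • (v y - v z)‖ ^ 2 ≤ 0 := by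
    rw [norm_add_sq_real, real_inner_smul_left, real_inner_smul_right,
      norm_smul, norm_smul, Real.norm_eq_abs, Real.norm_eq_abs,
      abs_of_nonneg ht0, abs_of_nonneg (by linarith : (0:ℝ) ≤ 1 - t)]
    ring_nf
    ring_nf at H
    linarith
  have hw : t • (v x - v z) + (1 - t) • (v y - v z) = 0 := by
    have h0 := norm_nonneg (t • (v x - v z) + (1 - t) • (v y - v z))
    have : ‖t • (v x - v z) + (1 - t) • (v y - v z)‖ = 0 := by nlinarith
    exact norm_eq_zero.mp this
  have hfin : t • v x + (1 - t) • v y - v z = 0 := by rw [← hw]; module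
  rw [hz] at hfin
  exact (sub_eq_zero.mp hfin).symm
end

section
/- Let A ⊆ ℝᵐ be nonempty, let u : A → ℝᵐ be a 1-Lipschitz map, let T : ℝᵐ → ℝᵐ be an isometry, and let δ ≥ 0 satisfy ‖u(x) − T(x)‖ ≤ δ for all x ∈ A. Then there exists a 1-Lipschitz map ũ : ℝᵐ → ℝᵐ with ũ(x) = u(x) for all x ∈ A and ‖ũ(x) − T(x)‖ ≤ δ for all x ∈ ℝᵐ. -/
/-!
Extend `u` one point at a time and pass to all of `E` by compactness (of closed balls for a
single point, of `∏ₓ closedBall (T x) δ` in `E → E` for the whole extension).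

A value at a new point `x₀` must lie in `closedBall (T x₀) δ` and in the balls
`closedBall (u a) ‖x₀ - a‖`. Finitely many balls `closedBall (yᵢ) rᵢ` meet as soon as
`∑ cᵢ ‖yᵢ‖² - ‖∑ cᵢ yᵢ‖² ≤ ∑ cᵢ rᵢ²` for all probability weights `c`: for weights maximising
the gap between the two sides, the barycentre `∑ cᵢ yᵢ` lies in every ball, since otherwise
shifting mass towards a ball that misses it would increase the gap. For the balls at hand this
variance inequality comes from writing the variance as a sum of pairwise squared distances, which
only decrease from the points `T aᵢ` to the values `u aᵢ`.
-/

open Finset RealInnerProductSpace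

variable {E : Type*} [NormedAddCommGroup E] [InnerProductSpace ℝ E]
variable {ι : Type*} [Fintype ι]

lemma inner_sum_smul_sum_smul (c : ι → ℝ) (f g : ι → E) :
    ⟪∑ i, c i • f i, ∑ j, c j • g j⟫ = ∑ i, ∑ j, c i * c j * ⟪f i, g j⟫ := by
  rw [sum_inner]
  simp only [inner_sum, real_inner_smul_left, real_inner_smul_right]
  exact sum_congr rfl fun i _ => sum_congr rfl fun j _ => by ring

def dispersion (c : ι → ℝ) (z : ι → E) : ℝ :=
  (∑ i, c i) * ∑ i, c i * ‖z i‖ ^ 2 - ‖∑ i, c i • z i‖ ^ 2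

lemma two_mul_dispersion (c : ι → ℝ) (z : ι → E) :
    2 * dispersion c z = ∑ i, ∑ j, c i * c j * ‖z i - z j‖ ^ 2 := by
  have expand : ∀ i j, c i * c j * ‖z i - z j‖ ^ 2
      = c j * (c i * ‖z i‖ ^ 2) + c i * (c j * ‖z j‖ ^ 2) - 2 * (c i * c j * ⟪z i, z j⟫) := by
    intro i j
    rw [norm_sub_sq_real]
    ring
  simp only [expand, sum_sub_distrib, sum_add_distrib, ← mul_sum, ← sum_mul,
    ← inner_sum_smul_sum_smul, real_inner_self_eq_norm_sq, dispersion]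
  ring

lemma dispersion_le_of_norm_sub_le {c : ι → ℝ} (hc : ∀ i, 0 ≤ c i) {x y : ι → E}
    (hxy : ∀ i j, ‖y i - y j‖ ≤ ‖x i - x j‖) : dispersion c y ≤ dispersion c x := by
  suffices 2 * dispersion c y ≤ 2 * dispersion c x by linarith
  simp only [two_mul_dispersion]
  gcongr with i _ j _
  · exact mul_nonneg (hc i) (hc j)
  · exact hxy i j

lemma norm_sum_smul_sub_le {c : ι → ℝ} (hc : ∀ i, 0 ≤ c i) {x y : ι → E} {δ : ℝ}
    (hyx : ∀ i, ‖y i - x i‖ ≤ δ) :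
    ‖∑ i, c i • y i - ∑ i, c i • x i‖ ≤ (∑ i, c i) * δ := by
  rw [← sum_sub_distrib, sum_mul]
  refine (norm_sum_le _ _).trans (sum_le_sum fun i _ => ?_)
  rw [← smul_sub, norm_smul, Real.norm_of_nonneg (hc i)]
  exact mul_le_mul_of_nonneg_left (hyx i) (hc i)

lemma variance_le_of_norm_sub_le {c : ι → ℝ} (hc : ∀ i, 0 ≤ c i) (hc1 : ∑ i, c i ≤ 1)
    {x y : ι → E} {δ : ℝ} (hxy : ∀ i j, ‖y i - y j‖ ≤ ‖x i - x j‖)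
    (hyx : ∀ i, ‖y i - x i‖ ≤ δ) :
    ∑ i, c i * ‖y i‖ ^ 2 - ‖∑ i, c i • y i‖ ^ 2
      ≤ ∑ i, c i * ‖x i‖ ^ 2 + (1 - ∑ i, c i) * δ ^ 2 := by
  set s := ∑ i, c i
  obtain hs | hs := (sum_nonneg fun i _ => hc i : 0 ≤ s).eq_or_lt
  · have hc0 : ∀ i, c i = 0 := fun i =>
      (sum_eq_zero_iff_of_nonneg fun i _ => hc i).mp hs.symm i (mem_univ i)
    simp only [hc0, zero_mul, zero_smul, sum_const_zero, norm_zero]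
    nlinarith [sq_nonneg δ]
  have hdisp := dispersion_le_of_norm_sub_le hc hxy
  have hYX : ‖∑ i, c i • y i‖ ≤ ‖∑ i, c i • x i‖ + s * δ :=
    (norm_le_norm_add_norm_sub' _ _).trans (by gcongr; exact norm_sum_smul_sub_le hc hyx)
  have hYX_sq := mul_le_mul_of_nonneg_left (pow_le_pow_left₀ (norm_nonneg _) hYX 2)
    (sub_nonneg.mpr hc1)
  refine le_of_mul_le_mul_left ?_ hs
  unfold dispersion at hdisp
  -- with `X = ∑ cᵢ xᵢ`, `Y = ∑ cᵢ yᵢ`, what is left is `(1 - s) ‖Y‖² - ‖X‖² ≤ s (1 - s) δ²`,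
  -- and `(1 - s) (‖X‖ + s δ)² - ‖X‖² - s (1 - s) δ² = - s (‖X‖ - (1 - s) δ)²`
  nlinarith [mul_nonneg hs.le (sq_nonneg (‖∑ i, c i • x i‖ - (1 - s) * δ))]

lemma sum_smul_lineMap_single [DecidableEq ι] {M : Type*} [AddCommGroup M] [Module ℝ M]
    (c : ι → ℝ) (j : ι) (t : ℝ) (y : ι → M) :
    ∑ i, ((1 - t) • c + t • Pi.single j 1 : ι → ℝ) i • y i
      = (1 - t) • ∑ i, c i • y i + t • y j := by
  simp [add_smul, sum_add_distrib, mul_smul, smul_sum, Pi.single_apply, ite_smul]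

open Filter Topology in
lemma exists_forall_norm_sub_sq_le_of_variance_le (y : ι → E) (ρ : ι → ℝ)
    (h : ∀ c ∈ stdSimplex ℝ ι, ∑ i, c i * ‖y i‖ ^ 2 - ‖∑ i, c i • y i‖ ^ 2 ≤ ∑ i, c i * ρ i) :
    ∃ p : E, ∀ i, ‖p - y i‖ ^ 2 ≤ ρ i := by
  classical
  cases isEmpty_or_nonempty ι with
  | inl _ => exact ⟨0, isEmptyElim⟩
  | inr _ =>
  set V : (ι → ℝ) → ℝ := fun c => ∑ i, c i * ‖y i‖ ^ 2 - ‖∑ i, c i • y i‖ ^ 2 - ∑ i, c i * ρ i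
  obtain ⟨c, hc, hmax⟩ := (isCompact_stdSimplex ℝ ι).exists_isMaxOn
    ⟨_, single_mem_stdSimplex ℝ (Classical.arbitrary ι)⟩ (by fun_prop : Continuous V).continuousOn
  set p := ∑ i, c i • y i with hp
  refine ⟨p, fun j => ?_⟩
  have hVc : V c ≤ 0 := sub_nonpos.mpr (h c hc)
  set w : ℝ → ι → ℝ := fun t => (1 - t) • c + t • Pi.single j 1
  have hmove : ∀ t : ℝ, V (w t)
      = V c + t * (‖p - y j‖ ^ 2 - ρ j - V c) - t ^ 2 * ‖p - y j‖ ^ 2 := by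
    intro t
    have hyj : ‖y j‖ ^ 2 = ‖p‖ ^ 2 + 2 * ⟪p, y j - p⟫ + ‖y j - p‖ ^ 2 := by
      rw [← norm_add_sq_real, add_sub_cancel]
    have hsum : ∀ a : ι → ℝ, ∑ i, w t i * a i = (1 - t) * ∑ i, c i * a i + t * a j := fun a => by
      simpa only [smul_eq_mul] using sum_smul_lineMap_single c j t a
    simp only [V, hsum, w, sum_smul_lineMap_single, ← hp]
    rw [show (1 - t) • p + t • y j = p + t • (y j - p) by module, norm_add_sq_real, norm_smul,
      real_inner_smul_right, norm_sub_rev p, Real.norm_eq_abs, mul_pow, sq_abs, hyj]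
    ring
  have hle : ∀ t ∈ Set.Ioo (0 : ℝ) 1, ‖p - y j‖ ^ 2 - ρ j - V c ≤ t * ‖p - y j‖ ^ 2 := by
    rintro t ⟨ht0, ht1⟩
    have hmem : w t ∈ stdSimplex ℝ ι :=
      convex_stdSimplex ℝ ι hc (single_mem_stdSimplex ℝ j) (by linarith) ht0.le (by ring)
    have hVw : V (w t) ≤ V c := hmax hmem
    rw [hmove] at hVw
    nlinarith
  have hlim : Tendsto (fun t => t * ‖p - y j‖ ^ 2) (𝓝[>] 0) (𝓝 0) := by
    simpa using ((continuous_mul_const (‖p - y j‖ ^ 2)).tendsto 0).mono_left nhdsWithin_le_nhds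
  have := ge_of_tendsto hlim (eventually_of_mem (Ioo_mem_nhdsGT one_pos) hle)
  linarith

lemma exists_norm_le_forall_norm_sub_le {x y : ι → E} {δ : ℝ} (hδ : 0 ≤ δ)
    (hxy : ∀ i j, ‖y i - y j‖ ≤ ‖x i - x j‖) (hyx : ∀ i, ‖y i - x i‖ ≤ δ) :
    ∃ q : E, ‖q‖ ≤ δ ∧ ∀ i, ‖q - y i‖ ≤ ‖x i‖ := by
  obtain ⟨q, hq⟩ := exists_forall_norm_sub_sq_le_of_variance_le
    (fun o : Option ι => o.elim 0 y) (fun o => o.elim (δ ^ 2) fun i => ‖x i‖ ^ 2) fun c hc => by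
      obtain ⟨hc0, hc1⟩ := hc
      rw [Fintype.sum_option] at hc1
      have := variance_le_of_norm_sub_le (fun i => hc0 (some i)) (by linarith [hc0 none]) hxy hyx
      rw [show 1 - ∑ i, c (some i) = c none by linarith] at this
      simp only [Fintype.sum_option, Option.elim_none, Option.elim_some, norm_zero, smul_zero,
        zero_add]
      linarith
  refine ⟨q, ?_, fun i => ?_⟩
  · have := hq none
    simp only [Option.elim_none, sub_zero] at this
    exact (pow_le_pow_iff_left₀ (norm_nonneg _) hδ two_ne_zero).mp this
  · exact (pow_le_pow_iff_left₀ (norm_nonneg _) (norm_nonneg _) two_ne_zero).mp (hq (some i))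

open Function in
lemma LipschitzOnWith.update_insert {α β : Type*} [PseudoMetricSpace α] [PseudoMetricSpace β]
    [DecidableEq α] {K : NNReal} {f : α → β} {s : Set α} (hf : LipschitzOnWith K f s) {x : α}
    {y : β} (hy : ∀ b ∈ s, dist y (f b) ≤ K * dist x b) :
    LipschitzOnWith K (update f x y) (insert x s) := by
  refine LipschitzOnWith.of_dist_le_mul fun a ha b hb => ?_
  by_cases hax : a = x <;> by_cases hbx : b = x
  · simp [hax, hbx]
  · rw [hax, update_self, update_of_ne hbx]
    exact hy b (hb.resolve_left hbx)
  · rw [hbx, update_self, update_of_ne hax, dist_comm, dist_comm a]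
    exact hy a (ha.resolve_left hax)
  · rw [update_of_ne hax, update_of_ne hbx]
    exact hf.dist_le_mul a (ha.resolve_left hax) b (hb.resolve_left hbx)

section FiniteDimensional

open Metric

variable [FiniteDimensional ℝ E]

lemma exists_dist_le_forall_dist_le {B : Set E} {v T : E → E} {δ : ℝ} (hδ : 0 ≤ δ)
    (hT : Isometry T) (hv : LipschitzOnWith 1 v B) (hvT : ∀ b ∈ B, dist (v b) (T b) ≤ δ)
    (x₀ : E) : ∃ p, dist p (T x₀) ≤ δ ∧ ∀ b ∈ B, dist p (v b) ≤ dist x₀ b := by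
  obtain ⟨p, hpT, hpB⟩ := (isCompact_closedBall (T x₀) δ).inter_iInter_nonempty
    (fun b : B => closedBall (v b) (dist x₀ b)) (fun _ => isClosed_closedBall) fun U => by
      obtain ⟨q, hq, hqU⟩ := exists_norm_le_forall_norm_sub_le (ι := U)
        (x := fun b => T b - T x₀) (y := fun b => v b - T x₀) hδ
        (fun b b' => by
          simpa only [sub_sub_sub_cancel_right, ← dist_eq_norm, hT.dist_eq, NNReal.coe_one,
            one_mul] using hv.dist_le_mul _ (b : B).2 _ (b' : B).2)
        (fun b => by simpa only [sub_sub_sub_cancel_right, ← dist_eq_norm] using hvT _ (b : B).2)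
      refine ⟨T x₀ + q, ?_, Set.mem_iInter₂.mpr fun b hb => ?_⟩
      · rwa [mem_closedBall, dist_eq_norm, add_sub_cancel_left]
      · have hTb : ‖T b - T x₀‖ = dist x₀ b := by rw [← dist_eq_norm, hT.dist_eq, dist_comm]
        rw [mem_closedBall, dist_eq_norm, ← hTb, show T x₀ + q - v b = q - (v b - T x₀) by abel]
        exact hqU ⟨b, hb⟩
  exact ⟨p, hpT, fun b hb => Set.mem_iInter.mp hpB ⟨b, hb⟩⟩

open Function in
lemma exists_lipschitzOnWith_extension_insert {B : Set E} {v T : E → E} {δ : ℝ} (hδ : 0 ≤ δ)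
    (hT : Isometry T) (hv : LipschitzOnWith 1 v B) (hvT : ∀ x, dist (v x) (T x) ≤ δ) (x₀ : E) :
    ∃ v' : E → E, Set.EqOn v' v B ∧ LipschitzOnWith 1 v' (insert x₀ B) ∧
      ∀ x, dist (v' x) (T x) ≤ δ := by
  classical
  obtain ⟨p, hpT, hpB⟩ := exists_dist_le_forall_dist_le hδ hT hv (fun b _ => hvT b) x₀
  refine ⟨update v x₀ p, fun b hb => ?_, hv.update_insert (by simpa using hpB), fun x => ?_⟩
  · rcases eq_or_ne b x₀ with rfl | hne
    · simpa using hpB b hb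
    · exact update_of_ne hne _ _
  · rcases eq_or_ne x x₀ with rfl | hne
    · simpa using hpT
    · simpa [update_of_ne hne] using hvT x

lemma exists_lipschitzOnWith_extension_union_finset {A : Set E} {u T : E → E} {δ : ℝ}
    (hδ : 0 ≤ δ) (hT : Isometry T) (hu : LipschitzOnWith 1 u A)
    (huT : ∀ x ∈ A, dist (u x) (T x) ≤ δ) (P : Finset E) :
    ∃ v : E → E, Set.EqOn v u A ∧ LipschitzOnWith 1 v (A ∪ P) ∧ ∀ x, dist (v x) (T x) ≤ δ := by
  classical
  induction P using Finset.induction_on with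
  | empty =>
    refine ⟨A.piecewise u T, Set.piecewise_eqOn _ _ _, ?_, fun x => ?_⟩
    · rw [Finset.coe_empty, Set.union_empty]
      refine LipschitzOnWith.of_dist_le_mul fun x hx y hy => ?_
      rw [Set.piecewise_eq_of_mem _ _ _ hx, Set.piecewise_eq_of_mem _ _ _ hy]
      exact hu.dist_le_mul x hx y hy
    · by_cases hx : x ∈ A
      · simpa [hx] using huT x hx
      · simpa [hx] using hδ
  | insert a P _ ih =>
    obtain ⟨v, hvu, hv, hvT⟩ := ih
    obtain ⟨v', hv'v, hv', hv'T⟩ := exists_lipschitzOnWith_extension_insert hδ hT hv hvT a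
    refine ⟨v', (hv'v.mono Set.subset_union_left).trans hvu, ?_, hv'T⟩
    rwa [Finset.coe_insert, Set.union_insert]

theorem exists_lipschitzWith_extension_near_isometry {A : Set E} {u T : E → E} {δ : ℝ}
    (hδ : 0 ≤ δ) (hT : Isometry T) (hu : LipschitzOnWith 1 u A)
    (huT : ∀ x ∈ A, dist (u x) (T x) ≤ δ) :
    ∃ f : E → E, LipschitzWith 1 f ∧ Set.EqOn f u A ∧ ∀ x, dist (f x) (T x) ≤ δ := by
  classical
  let t : Finset E → Set (E → E) := fun P => {f | Set.EqOn f u A ∧ LipschitzOnWith 1 f (A ∪ P)}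
  have ht : ∀ P, IsClosed (t P) := fun P => by
    simp only [t, Set.ofPred_and, Set.EqOn, Set.ofPred_forall]
    exact (isClosed_iInter fun a => isClosed_iInter fun _ =>
      isClosed_eq (continuous_apply a) continuous_const).inter
      (isClosed_setOfPred_lipschitzOnWith 1 _)
  have hK : IsCompact (Set.univ.pi fun x => closedBall (T x) δ) :=
    isCompact_univ_pi fun x => isCompact_closedBall (T x) δ
  obtain ⟨f, hfT, hft⟩ := hK.inter_iInter_nonempty t ht fun U => by
    obtain ⟨v, hvu, hv, hvT⟩ :=
      exists_lipschitzOnWith_extension_union_finset hδ hT hu huT (U.sup id)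
    refine ⟨v, Set.mem_univ_pi.mpr hvT, Set.mem_iInter₂.mpr fun P hP => ⟨hvu, hv.mono ?_⟩⟩
    exact Set.union_subset_union_right _ (Finset.coe_subset.mpr (Finset.le_sup (f := id) hP))
  have hf : ∀ P, f ∈ t P := Set.mem_iInter.mp hft
  refine ⟨f, LipschitzWith.mk_one fun x y => ?_, (hf ∅).1, Set.mem_univ_pi.mp hfT⟩
  simpa using (hf {x, y}).2.dist_le_mul x (by simp) y (by simp)

end FiniteDimensional

theorem stmt_19_general (m : ℕ) (A : Set (EuclideanSpace ℝ (Fin m)))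
    (u : EuclideanSpace ℝ (Fin m) → EuclideanSpace ℝ (Fin m))
    (hu : ∀ x ∈ A, ∀ y ∈ A, ‖u x - u y‖ ≤ ‖x - y‖)
    (T : EuclideanSpace ℝ (Fin m) → EuclideanSpace ℝ (Fin m))
    (hT : ∀ x y : EuclideanSpace ℝ (Fin m), ‖T x - T y‖ = ‖x - y‖)
    (δ : ℝ) (hδ : 0 ≤ δ) (hclose : ∀ x ∈ A, ‖u x - T x‖ ≤ δ) :
    ∃ uext : EuclideanSpace ℝ (Fin m) → EuclideanSpace ℝ (Fin m),
      (∀ x y : EuclideanSpace ℝ (Fin m), ‖uext x - uext y‖ ≤ ‖x - y‖) ∧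
      (∀ x ∈ A, uext x = u x) ∧
      (∀ x : EuclideanSpace ℝ (Fin m), ‖uext x - T x‖ ≤ δ) := by
  obtain ⟨f, hf, hfu, hfT⟩ := exists_lipschitzWith_extension_near_isometry (u := u) (T := T) hδ
    (Isometry.of_dist_eq fun x y => by rw [dist_eq_norm, dist_eq_norm, hT])
    (LipschitzOnWith.mk_one fun x hx y hy => by simpa only [dist_eq_norm] using hu x hx y hy)
    (fun x hx => by simpa only [dist_eq_norm] using hclose x hx)
  refine ⟨f, fun x y => ?_, hfu, fun x => by simpa only [dist_eq_norm] using hfT x⟩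
  simpa [dist_eq_norm] using hf.dist_le_mul x y

theorem stmt_19 (m : ℕ) (A : Set (EuclideanSpace ℝ (Fin m))) (hA : A.Nonempty)
    (u : EuclideanSpace ℝ (Fin m) → EuclideanSpace ℝ (Fin m))
    (hu : ∀ x ∈ A, ∀ y ∈ A, ‖u x - u y‖ ≤ ‖x - y‖)
    (T : EuclideanSpace ℝ (Fin m) → EuclideanSpace ℝ (Fin m))
    (hT : ∀ x y : EuclideanSpace ℝ (Fin m), ‖T x - T y‖ = ‖x - y‖)
    (δ : ℝ) (hδ : 0 ≤ δ) (hclose : ∀ x ∈ A, ‖u x - T x‖ ≤ δ) :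
    ∃ uext : EuclideanSpace ℝ (Fin m) → EuclideanSpace ℝ (Fin m),
      (∀ x y : EuclideanSpace ℝ (Fin m), ‖uext x - uext y‖ ≤ ‖x - y‖) ∧
      (∀ x ∈ A, uext x = u x) ∧
      (∀ x : EuclideanSpace ℝ (Fin m), ‖uext x - T x‖ ≤ δ) :=
  stmt_19_general m A u hu T hT δ hδ hclose
end
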